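/- arXiv:1910.08923 — 2 statements merged into one kernel-verified Lean document; each statement's English description precedes it below -/
import Mathlib

section
/- Let n be a positive integer and set s_n = ⌊ln(n)/ln(1.25)⌋ + 1. For every f ∈ Γ_α there exist g_n ∈ Γ_α with supp(g_n) ⊆ [1 − 1/n, 1), an element h ∈ Γ_α, and s_n involutions i_1, …, i_{s_n} ∈ Γ_α such that f = i_1 ∘ ⋯ ∘ i_{s_n} ∘ (h ∘ g_n ∘ h⁻¹). -/
/-- `f` is an interval exchange transformation (IET) of `[0,1)`, viewed as a permutation of `ℝ`
that fixes every point outside `[0,1)`: there is a finite subdivision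
`0 = a 0 < a 1 < … < a (m+1) = 1` such that `f` is a translation on each half-open
interval `[a i, a (i+1))`. -/
def IsIET (f : Equiv.Perm ℝ) : Prop :=
  (∀ x : ℝ, x ∉ Set.Ico (0 : ℝ) 1 → f x = x) ∧
  ∃ (m : ℕ) (a : Fin (m + 2) → ℝ),
    a 0 = 0 ∧ a (Fin.last (m + 1)) = 1 ∧ StrictMono a ∧
    ∀ i : Fin (m + 1), ∃ c : ℝ, ∀ x ∈ Set.Ico (a i.castSucc) (a i.succ), f x = x + c

/-- `f` is an interval exchange transformation with flips (FIET) of `[0,1)`, viewed as a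
permutation of `ℝ` fixing every point outside `[0,1)`: there is a finite subdivision
`0 = a 0 < a 1 < … < a (m+1) = 1` such that on each open interval `(a i, a (i+1))`, `f` is an
isometry, i.e. of the form `x ↦ x + c` or `x ↦ c - x`. -/
def IsFIET (f : Equiv.Perm ℝ) : Prop :=
  (∀ x : ℝ, x ∉ Set.Ico (0 : ℝ) 1 → f x = x) ∧
  ∃ (m : ℕ) (a : Fin (m + 2) → ℝ),
    a 0 = 0 ∧ a (Fin.last (m + 1)) = 1 ∧ StrictMono a ∧
    ∀ i : Fin (m + 1),
      (∃ c : ℝ, ∀ x ∈ Set.Ioo (a i.castSucc) (a i.succ), f x = x + c) ∨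
      (∃ c : ℝ, ∀ x ∈ Set.Ioo (a i.castSucc) (a i.succ), f x = c - x)

/-- Two permutations of `ℝ` agree outside a finite set; this is equality of the classes in the
quotient group `𝒢̄` of FIETs modulo maps that are the identity off a finite set. -/
def FEq (f g : Equiv.Perm ℝ) : Prop := {x : ℝ | f x ≠ g x}.Finite

open scoped commutatorElement

/-- The set of commutators `⁅a, b⁆ = a * b * a⁻¹ * b⁻¹` of interval exchange
transformations. -/
def IETCommutators : Set (Equiv.Perm ℝ) :=
  {x | ∃ a b : Equiv.Perm ℝ, IsIET a ∧ IsIET b ∧ x = ⁅a, b⁆}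

/-- The set of commutators `⁅a, b⁆ = a * b * a⁻¹ * b⁻¹` of interval exchange
transformations with flips. -/
def FIETCommutators : Set (Equiv.Perm ℝ) :=
  {x | ∃ a b : Equiv.Perm ℝ, IsFIET a ∧ IsFIET b ∧ x = ⁅a, b⁆}

/-- `g` is a product of at most `n` commutators of elements of the group `𝒢` of interval
exchange transformations; i.e. the commutator length of `g` in `𝒢` is at most `n`. -/
def IsProdOfIETCommutators (n : ℕ) (g : Equiv.Perm ℝ) : Prop :=
  ∃ l : List (Equiv.Perm ℝ), l.length ≤ n ∧ (∀ x ∈ l, x ∈ IETCommutators) ∧ g = l.prod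

/-- `f ∈ 𝒢_m`: `f` is an IET of `[0,1)` admitting a subdivision into at most `m` half-open
intervals on each of which it is a translation. -/
def MemGm (m : ℕ) (f : Equiv.Perm ℝ) : Prop :=
  (∀ x : ℝ, x ∉ Set.Ico (0 : ℝ) 1 → f x = x) ∧
  ∃ (k : ℕ) (a : Fin (k + 2) → ℝ), k + 1 ≤ m ∧
    a 0 = 0 ∧ a (Fin.last (k + 1)) = 1 ∧ StrictMono a ∧
    ∀ i : Fin (k + 1), ∃ c : ℝ, ∀ x ∈ Set.Ico (a i.castSucc) (a i.succ), f x = x + c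

/-- `g` is periodic: every orbit `{gⁿ x : n ∈ ℤ}` is finite. -/
def IsPeriodicPerm (g : Equiv.Perm ℝ) : Prop :=
  ∀ x : ℝ, (Set.range fun n : ℤ => (g ^ n) x).Finite

/-- `f` is a restricted rotation: for some half-open interval `J = [a, b) ⊆ [0,1)` and some
`α ∈ [0, b - a)`, `f` is the identity outside `J` and sends `x ∈ J` to
`a + ((x - a + α) mod (b - a))`. -/
def IsRestrictedRotation (f : Equiv.Perm ℝ) : Prop :=
  ∃ a b α : ℝ, 0 ≤ a ∧ a < b ∧ b ≤ 1 ∧ α ∈ Set.Ico (0 : ℝ) (b - a) ∧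
    (∀ x : ℝ, x ∉ Set.Ico a b → f x = x) ∧
    ∀ x ∈ Set.Ico a b, f x = x + α - (b - a) * (⌊(x - a + α) / (b - a)⌋ : ℝ)

/-- `Δ_α`: the additive subgroup of `ℝ` generated by `α 0, …, α (p-1)` and `1`. -/
def Delta {p : ℕ} (α : Fin p → ℝ) : AddSubgroup ℝ :=
  AddSubgroup.closure (Set.range α ∪ {1})

/-- `g ∈ Γ_α`: `g` is an IET all of whose discontinuity points (as a map of `[0,1)`)
belong to the subgroup `Δ`. -/
def MemGamma (Δ : AddSubgroup ℝ) (g : Equiv.Perm ℝ) : Prop :=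
  IsIET g ∧
  ∀ x ∈ Set.Ico (0 : ℝ) 1, ¬ContinuousWithinAt (⇑g) (Set.Ico (0 : ℝ) 1) x → x ∈ Δ

/-- `g ∈ Γ_α(J)` for `J = [c, d)`: `g` is an IET supported in `[c, d)` all of whose
discontinuity points belong to `Δ`. -/
def MemGammaJ (Δ : AddSubgroup ℝ) (c d : ℝ) (g : Equiv.Perm ℝ) : Prop :=
  IsIET g ∧ (∀ x : ℝ, x ∉ Set.Ico c d → g x = x) ∧
  ∀ x ∈ Set.Ico (0 : ℝ) 1, ¬ContinuousWithinAt (⇑g) (Set.Ico (0 : ℝ) 1) x → x ∈ Δ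


theorem Equiv.Perm.apply_inv_self {α : Type*} (f : Equiv.Perm α) (x : α) : f (f⁻¹ x) = x :=
  f.apply_symm_apply x

theorem Equiv.Perm.inv_apply_self {α : Type*} (f : Equiv.Perm α) (x : α) : f⁻¹ (f x) = x :=
  f.symm_apply_apply x

namespace IETProof

open Set MeasureTheory Topology Filter
open scoped Classical

noncomputable section

abbrev I01 : Set ℝ := Set.Ico (0:ℝ) 1

def Fix01 (f : Equiv.Perm ℝ) : Prop := ∀ x : ℝ, x ∉ I01 → f x = x

def GapConst (f : Equiv.Perm ℝ) (s : Finset ℝ) : Prop :=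
  ∀ x y : ℝ, x ∈ I01 → y ∈ I01 → x ≤ y → (∀ b ∈ s, b ≤ x ∨ y < b) → f y - y = f x - x

def Nice (Δ : AddSubgroup ℝ) (f : Equiv.Perm ℝ) : Prop :=
  Fix01 f ∧ (∀ x ∈ I01, f x - x ∈ Δ) ∧
  ∃ s : Finset ℝ, (↑s ⊆ I01 ∩ (Δ : Set ℝ)) ∧ 0 ∈ s ∧ GapConst f s

variable {Δ : AddSubgroup ℝ} {f g : Equiv.Perm ℝ}

lemma Fix01.maps (hf : Fix01 f) {x : ℝ} (hx : x ∈ I01) : f x ∈ I01 := by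
  by_contra h
  have h2 : f (f x) = f x := hf _ h
  have h3 : f x = x := f.injective h2
  rw [h3] at h
  exact h hx

lemma Fix01.inv (hf : Fix01 f) : Fix01 f⁻¹ := by
  intro x hx
  have h := hf x hx
  calc f⁻¹ x = f⁻¹ (f x) := by rw [h]
  _ = x := Equiv.Perm.inv_apply_self f x

lemma Fix01.mul (hf : Fix01 f) (hg : Fix01 g) : Fix01 (f * g) := by
  intro x hx
  simp only [Equiv.Perm.mul_apply, hg _ hx, hf _ hx]

lemma fix01_one : Fix01 (1 : Equiv.Perm ℝ) := fun _ _ => rfl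

lemma Fix01.inv_maps (hf : Fix01 f) {x : ℝ} (hx : x ∈ I01) : f⁻¹ x ∈ I01 := hf.inv.maps hx

lemma exists_bounds (s : Finset ℝ) (hsub : ↑s ⊆ I01) (h0 : (0:ℝ) ∈ s) {x : ℝ} (hx : x ∈ I01) :
    ∃ b u : ℝ, b ∈ s ∧ b ≤ x ∧ x < u ∧ u ≤ 1 ∧ (∀ b' ∈ s, b' ≤ b ∨ u ≤ b') ∧ (u = 1 ∨ u ∈ s) := by
  have hne1 : ((s.filter (fun t => t ≤ x))).Nonempty := ⟨0, Finset.mem_filter.mpr ⟨h0, hx.1⟩⟩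
  have hne2 : (insert (1:ℝ) (s.filter (fun t => x < t))).Nonempty := ⟨1, Finset.mem_insert_self _ _⟩
  have hbmem := (s.filter (fun t => t ≤ x)).max'_mem hne1
  rw [Finset.mem_filter] at hbmem
  have humem := (insert (1:ℝ) (s.filter (fun t => x < t))).min'_mem hne2
  rw [Finset.mem_insert] at humem
  refine ⟨(s.filter (fun t => t ≤ x)).max' hne1,
    (insert (1:ℝ) (s.filter (fun t => x < t))).min' hne2, hbmem.1, hbmem.2, ?_, ?_, ?_, ?_⟩
  · rcases humem with h | h
    · rw [h]; exact hx.2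
    · exact (Finset.mem_filter.mp h).2
  · rcases humem with h | h
    · exact le_of_eq h
    · exact le_of_lt (hsub (Finset.mem_filter.mp h).1).2
  · intro b' hb'
    rcases le_or_gt b' x with h | h
    · exact Or.inl (Finset.le_max' (s.filter (fun t => t ≤ x)) b'
        (Finset.mem_filter.mpr ⟨hb', h⟩))
    · exact Or.inr (Finset.min'_le (insert (1:ℝ) (s.filter (fun t => x < t))) b'
        (Finset.mem_insert_of_mem (Finset.mem_filter.mpr ⟨hb', h⟩)))
  · rcases humem with h | h
    · exact Or.inl h
    · exact Or.inr (Finset.mem_filter.mp h).1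

lemma GapConst.const_on {s : Finset ℝ} (hg : GapConst f s) {b u : ℝ} (hb0 : 0 ≤ b) (hu : u ≤ 1)
    (hgap : ∀ b' ∈ s, b' ≤ b ∨ u ≤ b') : ∀ x, b ≤ x → x < u → f x - x = f b - b := by
  intro x hbx hxu
  have hxI : x ∈ I01 := ⟨le_trans hb0 hbx, lt_of_lt_of_le hxu hu⟩
  have hbI : b ∈ I01 := ⟨hb0, lt_of_le_of_lt hbx hxI.2⟩
  exact hg b x hbI hxI hbx (fun b' hb' => (hgap b' hb').imp id (fun h => lt_of_lt_of_le hxu h))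

theorem cover {m : ℕ} {a : Fin (m+2) → ℝ} (h0 : a 0 = 0) (h1 : a (Fin.last (m+1)) = 1)
    (hmono : StrictMono a) {x : ℝ} (hx : x ∈ I01) :
    ∃ i : Fin (m+1), x ∈ Ico (a i.castSucc) (a i.succ) := by
  have hne : (Finset.univ.filter (fun i : Fin (m+2) => a i ≤ x)).Nonempty :=
    ⟨0, Finset.mem_filter.mpr ⟨Finset.mem_univ _, by rw [h0]; exact hx.1⟩⟩
  have hmem := (Finset.univ.filter (fun i : Fin (m+2) => a i ≤ x)).max'_mem hne
  rw [Finset.mem_filter] at hmem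
  have hne_last : (Finset.univ.filter (fun i : Fin (m+2) => a i ≤ x)).max' hne ≠ Fin.last (m+1) := by
    intro h
    rw [h, h1] at hmem
    exact absurd hmem.2 (not_le.mpr hx.2)
  obtain ⟨i, hi⟩ := Fin.exists_castSucc_eq.mpr hne_last
  have hile : a i.castSucc ≤ x := by rw [hi]; exact hmem.2
  refine ⟨i, hile, ?_⟩
  by_contra h
  push_neg at h
  have hle := Finset.le_max' (Finset.univ.filter (fun i : Fin (m+2) => a i ≤ x)) i.succ
    (Finset.mem_filter.mpr ⟨Finset.mem_univ _, h⟩)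
  rw [← hi] at hle
  exact absurd hle (not_le.mpr (Fin.castSucc_lt_succ (i := i)))

lemma piece_disjoint' {m : ℕ} {a : Fin (m+2) → ℝ} (hmono : StrictMono a)
    (i j : Fin (m+1)) (hij : i ≠ j) :
    Disjoint (Ico (a i.castSucc) (a i.succ)) (Ico (a j.castSucc) (a j.succ)) := by
  have hs : ∀ i j : Fin (m+1), i < j → a i.succ ≤ a j.castSucc := by
    intro i j h
    apply hmono.monotone
    simp only [Fin.le_def, Fin.val_succ, Fin.coe_castSucc]
    exact h
  rw [Set.Ico_disjoint_Ico]
  rcases hij.lt_or_gt with h | h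
  · exact le_trans (min_le_left _ _) (le_trans (hs i j h) (le_max_right _ _))
  · exact le_trans (min_le_right _ _) (le_trans (hs j i h) (le_max_left _ _))

theorem partition_of_gap (s : Finset ℝ) (hsub : ↑s ⊆ I01) (h0 : (0:ℝ) ∈ s)
    (hgap : GapConst f s) :
    ∃ (m : ℕ) (a : Fin (m+2) → ℝ),
      a 0 = 0 ∧ a (Fin.last (m+1)) = 1 ∧ StrictMono a ∧
      (∀ i : Fin (m+1), a i.castSucc ∈ s) ∧
      ∀ i : Fin (m+1), ∀ x ∈ Ico (a i.castSucc) (a i.succ),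
        f x = x + (f (a i.castSucc) - a i.castSucc) := by
  obtain ⟨m, hm⟩ : ∃ m, s.card = m + 1 :=
    ⟨s.card - 1, (Nat.succ_pred_eq_of_pos (Finset.card_pos.mpr ⟨0, h0⟩)).symm⟩
  set e := s.orderIsoOfFin hm with hedef
  set a : Fin (m+2) → ℝ := fun i => if h : (i:ℕ) < m + 1 then (e ⟨i, h⟩ : ℝ) else 1 with hadef
  have hlt1 : ∀ j : Fin (m+1), ((e j : ℝ)) < 1 := fun j => (hsub (e j).2).2
  have hge0 : ∀ j : Fin (m+1), (0:ℝ) ≤ (e j : ℝ) := fun j => (hsub (e j).2).1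
  have hcast : ∀ (i : Fin (m+1)), a i.castSucc = e i := by
    intro i
    have h : ((i.castSucc : Fin (m+2)) : ℕ) < m + 1 := by
      simp only [Fin.coe_castSucc]; exact i.isLt
    rw [hadef]
    simp only [dif_pos h]
    congr 1
  have hmono : StrictMono a := by
    intro i j hij
    rw [hadef]
    by_cases hj : (j:ℕ) < m + 1
    · have hi : (i:ℕ) < m+1 := lt_trans (show (i:ℕ) < (j:ℕ) from hij) hj
      simp only [dif_pos hi, dif_pos hj]
      have : (⟨(i:ℕ), hi⟩ : Fin (m+1)) < ⟨(j:ℕ), hj⟩ := hij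
      exact_mod_cast e.strictMono this
    · simp only [dif_neg hj]
      have hi : (i:ℕ) < m+1 := by
        have hj2 : (j:ℕ) < m+2 := j.isLt
        have : (j:ℕ) = m+1 := by omega
        have : (i:ℕ) < (j:ℕ) := hij
        omega
      simp only [dif_pos hi]
      exact hlt1 _
  have hA0 : a 0 = 0 := by
    have h : ((0 : Fin (m+2)) : ℕ) < m + 1 := Nat.succ_pos m
    rw [hadef]
    simp only [dif_pos h]
    have h0le : ((e ⟨0, h⟩ : ℝ)) ≤ 0 := by
      have hj := e.symm ⟨(0:ℝ), h0⟩
      have heq : (e (e.symm ⟨(0:ℝ), h0⟩) : ℝ) = 0 := by rw [OrderIso.apply_symm_apply]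
      calc ((e ⟨0, h⟩ : ℝ)) ≤ (e (e.symm ⟨(0:ℝ), h0⟩) : ℝ) := by
            exact_mod_cast e.monotone (Fin.zero_le _)
      _ = 0 := heq
    exact le_antisymm h0le (hsub (e ⟨0, h⟩).2).1
  have hAlast : a (Fin.last (m+1)) = 1 := by
    rw [hadef]
    simp only [Fin.val_last, dif_neg (lt_irrefl (m+1))]
  refine ⟨m, a, hA0, hAlast, hmono, fun i => by rw [hcast]; exact (e i).2, ?_⟩
  intro i x hx
  have hb0 : 0 ≤ a i.castSucc := by rw [hcast]; exact hge0 i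
  have hu1 : a i.succ ≤ 1 := by
    rw [hadef]
    by_cases h : ((i.succ : Fin (m+2)) : ℕ) < m + 1
    · simp only [dif_pos h]; exact le_of_lt (hlt1 _)
    · simp only [dif_neg h]; exact le_rfl
  have hgap' : ∀ b' ∈ s, b' ≤ a i.castSucc ∨ a i.succ ≤ b' := by
    intro b' hb'
    set j := e.symm ⟨b', hb'⟩ with hjdef
    have hb'eq : (e j : ℝ) = b' := by rw [hjdef, OrderIso.apply_symm_apply]
    rcases le_or_gt j i with h | h
    · left
      rw [hcast, ← hb'eq]
      exact_mod_cast e.monotone h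
    · right
      have hsucclt : ((i.succ : Fin (m+2)) : ℕ) < m + 1 := by
        have : (i:ℕ) < (j:ℕ) := h
        have := j.isLt
        simp only [Fin.val_succ]
        omega
      have : a i.succ = (e ⟨(i:ℕ)+1, by simpa using hsucclt⟩ : ℝ) := by
        rw [hadef]
        simp only [dif_pos hsucclt]
        congr 1
      rw [this, ← hb'eq]
      have hle : (⟨(i:ℕ)+1, by simpa using hsucclt⟩ : Fin (m+1)) ≤ j := by
        have : (i:ℕ) < (j:ℕ) := h
        exact this
      exact_mod_cast e.monotone hle
  have := hgap.const_on hb0 hu1 hgap' x hx.1 hx.2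
  linarith

theorem Nice.one : Nice Δ 1 := by
  refine ⟨fix01_one, fun x _ => by simpa using Δ.zero_mem, {0}, ?_, Finset.mem_singleton_self 0, ?_⟩
  · intro b hb
    simp only [Finset.coe_singleton, mem_singleton_iff] at hb
    subst hb
    exact ⟨by constructor <;> norm_num, Δ.zero_mem⟩
  · intro x y _ _ _ _
    simp

theorem Nice.inv (hf : Nice Δ f) : Nice Δ f⁻¹ := by
  obtain ⟨hfix, hconst, s, hs, h0s, hgap⟩ := hf
  refine ⟨hfix.inv, ?_, insert 0 (s.image (⇑f)), ?_, Finset.mem_insert_self _ _, ?_⟩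
  · intro y hy
    have h1 : f⁻¹ y ∈ I01 := hfix.inv_maps hy
    have h2 := hconst _ h1
    rw [Equiv.Perm.apply_inv_self] at h2
    have h3 := Δ.neg_mem h2
    have : -(y - f⁻¹ y) = f⁻¹ y - y := by ring
    rwa [this] at h3
  · intro b hb
    simp only [Finset.coe_insert, Set.mem_insert_iff, Finset.coe_image, Set.mem_image] at hb
    rcases hb with rfl | ⟨t, ht, rfl⟩
    · exact ⟨⟨le_refl 0, zero_lt_one⟩, Δ.zero_mem⟩
    · have htI : t ∈ I01 := (hs ht).1
      refine ⟨hfix.maps htI, ?_⟩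
      have h2 := Δ.add_mem (hconst t htI) (hs ht).2
      have : f t - t + t = f t := by ring
      rwa [this] at h2
  · intro x y hxI hyI hxy hgap'
    have hsI : ↑s ⊆ I01 := fun t ht => (hs ht).1
    have hvI : f⁻¹ y ∈ I01 := hfix.inv_maps hyI
    obtain ⟨b, u, hbs, hbv, hvu, hu1, hmm, _⟩ := exists_bounds s hsI h0s hvI
    have hb0 : 0 ≤ b := (hsI hbs).1
    have hconstOn := hgap.const_on hb0 hu1 hmm
    have hy : f (f⁻¹ y) - f⁻¹ y = f b - b := hconstOn _ hbv hvu
    rw [Equiv.Perm.apply_inv_self] at hy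
    have hl_mem : f b ∈ insert (0:ℝ) (s.image (⇑f)) :=
      Finset.mem_insert_of_mem (Finset.mem_image_of_mem _ hbs)
    have hly : f b ≤ y := by linarith
    have hlx : f b ≤ x := by
      rcases hgap' _ hl_mem with h | h
      · exact h
      · linarith
    have hxc1 : b ≤ x - (f b - b) := by linarith
    have hxc2 : x - (f b - b) < u := by linarith
    have hfx : f (x - (f b - b)) = x := by
      have := hconstOn (x - (f b - b)) hxc1 hxc2
      linarith
    have hinvx : f⁻¹ x = x - (f b - b) := by
      apply f.injective
      rw [Equiv.Perm.apply_inv_self, hfx]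
    have hinvy : f⁻¹ y = y - (f b - b) := by linarith
    rw [hinvx, hinvy]; ring

theorem Nice.mul (hf : Nice Δ f) (hg : Nice Δ g) : Nice Δ (f * g) := by
  obtain ⟨hfix, hfc, sf, hsf, h0f, hgapf⟩ := hf
  obtain ⟨hgix, hgc, sg, hsg, h0g, hgapg⟩ := hg
  refine ⟨hfix.mul hgix, ?_, sg ∪ sf.image (⇑g⁻¹), ?_, Finset.mem_union_left _ h0g, ?_⟩
  · intro x hx
    have h1 : g x ∈ I01 := hgix.maps hx
    have h2 := Δ.add_mem (hfc _ h1) (hgc _ hx)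
    have h3 : f (g x) - g x + (g x - x) = (f * g) x - x := by
      simp only [Equiv.Perm.mul_apply]; ring
    rwa [h3] at h2
  · intro b hb
    simp only [Finset.coe_union, Set.mem_union, Finset.coe_image, Set.mem_image] at hb
    rcases hb with h | ⟨t, ht, rfl⟩
    · exact hsg h
    · have htI := (hsf ht).1
      have hgt : g⁻¹ t ∈ I01 := hgix.inv_maps htI
      refine ⟨hgt, ?_⟩
      have h2 := hgc _ hgt
      rw [Equiv.Perm.apply_inv_self] at h2
      have h3 := Δ.sub_mem (hsf ht).2 h2
      have : t - (t - g⁻¹ t) = g⁻¹ t := by ring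
      rwa [this] at h3
  · intro x y hxI hyI hxy hgap'
    have hcg : ∀ z, x ≤ z → z ≤ y → g z - z = g x - x := by
      intro z h1 h2
      refine hgapg x z hxI ⟨le_trans hxI.1 h1, lt_of_le_of_lt h2 hyI.2⟩ h1 (fun b hb => ?_)
      rcases hgap' b (Finset.mem_union_left _ hb) with h | h
      · exact Or.inl h
      · exact Or.inr (lt_of_le_of_lt h2 h)
    have hgy : g y - y = g x - x := hcg y hxy (le_refl y)
    have hgxy : g x ≤ g y := by linarith
    have hgapf' : ∀ b ∈ sf, b ≤ g x ∨ g y < b := by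
      intro b hb
      rcases le_or_gt b (g x) with h | h
      · exact Or.inl h
      rcases le_or_gt b (g y) with h2 | h2
      · exfalso
        have hbc1 : x < b - (g x - x) := by linarith
        have hbc2 : b - (g x - x) ≤ y := by linarith
        have hgb : g (b - (g x - x)) = b := by
          have := hcg (b - (g x - x)) (le_of_lt hbc1) hbc2
          linarith
        have hginvb : g⁻¹ b = b - (g x - x) := by
          apply g.injective
          rw [Equiv.Perm.apply_inv_self, hgb]
        have hmem : g⁻¹ b ∈ sg ∪ sf.image (⇑g⁻¹) :=
          Finset.mem_union_right _ (Finset.mem_image_of_mem _ hb)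
        rcases hgap' _ hmem with h3 | h3
        · rw [hginvb] at h3; linarith
        · rw [hginvb] at h3; linarith
      · exact Or.inr h2
    have hff := hgapf (g x) (g y) (hgix.maps hxI) (hgix.maps hyI) hgxy hgapf'
    simp only [Equiv.Perm.mul_apply]
    linarith

theorem Nice.listProd (l : List (Equiv.Perm ℝ)) (h : ∀ g ∈ l, Nice Δ g) : Nice Δ l.prod := by
  induction l with
  | nil => exact Nice.one
  | cons a t ih =>
      rw [List.prod_cons]
      exact (h a (List.mem_cons_self (a := a) (l := t))).mul (ih (fun g hg => h g (List.mem_cons_of_mem a hg)))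

theorem Nice.memGamma (hf : Nice Δ f) : MemGamma Δ f := by
  obtain ⟨hfix, hconst, s, hs, h0s, hgap⟩ := hf
  have hsI : ↑s ⊆ I01 := fun t ht => (hs ht).1
  obtain ⟨m, a, h0, h1, hmono, hmem, hpiece⟩ := partition_of_gap s hsI h0s hgap
  refine ⟨⟨hfix, m, a, h0, h1, hmono, fun i => ⟨_, hpiece i⟩⟩, ?_⟩
  intro x hxI hdisc
  by_cases hxs : x ∈ s
  · exact (hs hxs).2
  exfalso
  apply hdisc
  obtain ⟨b, u, hbs, hbx, hxu, hu1, hmm, _⟩ := exists_bounds s hsI h0s hxI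
  have hb0 : 0 ≤ b := (hsI hbs).1
  have hconstOn := hgap.const_on hb0 hu1 hmm
  have hbx' : b < x := lt_of_le_of_ne hbx (fun h => hxs (h ▸ hbs))
  have hev : ∀ᶠ z in 𝓝 x, z + (f b - b) = f z := by
    filter_upwards [Ioo_mem_nhds hbx' hxu] with z hz
    have := hconstOn z (le_of_lt hz.1) hz.2
    linarith
  have hc2 : ContinuousAt (fun z : ℝ => z + (f b - b)) x := by
    exact continuousAt_id.add continuousAt_const
  exact (hc2.congr hev).continuousWithinAt

lemma vol_biUnion_Ico {ι : Type*} (F : Finset ι) (lo hi : ι → ℝ)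
    (hle : ∀ i ∈ F, lo i ≤ hi i)
    (hdisj : ∀ i ∈ F, ∀ j ∈ F, i ≠ j → Disjoint (Ico (lo i) (hi i)) (Ico (lo j) (hi j))) :
    volume (⋃ i ∈ F, Ico (lo i) (hi i)) = ENNReal.ofReal (∑ i ∈ F, (hi i - lo i)) := by
  rw [measure_biUnion_finset (fun i hi' j hj hij => hdisj i hi' j hj hij) (fun _ _ => measurableSet_Ico),
    ENNReal.ofReal_sum_of_nonneg (fun i hi' => by linarith [hle i hi'])]
  simp [Real.volume_Ico]

lemma const_mem_delta {Δ : AddSubgroup ℝ} (h1 : (1:ℝ) ∈ Δ) {f : Equiv.Perm ℝ}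
    (hfix : Fix01 f) {r : ℕ}
    (b : Fin (r+2) → ℝ) (hb0 : b 0 = 0) (hblast : b (Fin.last (r+1)) = 1)
    (hbmono : StrictMono b) (hbΔ : ∀ i : Fin (r+1), b i.castSucc ∈ Δ)
    (hbpiece : ∀ i : Fin (r+1), ∀ x ∈ Ico (b i.castSucc) (b i.succ),
      f x = x + (f (b i.castSucc) - b i.castSucc)) :
    ∀ i : Fin (r+1), f (b i.castSucc) - b i.castSucc ∈ Δ := by
  classical
  set d : Fin (r+1) → ℝ := fun i => f (b i.castSucc) - b i.castSucc with hd
  show ∀ i, d i ∈ Δ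
  have hbI : ∀ i : Fin (r+1), b i.castSucc ∈ I01 := by
    intro i
    constructor
    · have := hbmono.monotone (Fin.zero_le i.castSucc); rwa [hb0] at this
    · have := hbmono (Fin.castSucc_lt_last i); rwa [hblast] at this
  have hpieceI : ∀ i : Fin (r+1), Ico (b i.castSucc) (b i.succ) ⊆ I01 := by
    intro i x hx
    constructor
    · exact le_trans (hbI i).1 hx.1
    · have h2 : b i.succ ≤ b (Fin.last (r+1)) := hbmono.monotone (Fin.le_last _)
      rw [hblast] at h2
      exact lt_of_lt_of_le hx.2 h2
  have hlam : ∀ i : Fin (r+1), b i.castSucc < b i.succ := fun i => hbmono (Fin.castSucc_lt_succ (i := i))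
  have hfval : ∀ i : Fin (r+1), ∀ y, b i.castSucc + d i ≤ y → y < b i.succ + d i →
      f (y - d i) = y := by
    intro i y hy1 hy2
    have hpre : y - d i ∈ Ico (b i.castSucc) (b i.succ) := ⟨by linarith, by linarith⟩
    rw [hbpiece i _ hpre]
    simp only [hd]
    ring
  have himgI : ∀ i : Fin (r+1), Ico (b i.castSucc + d i) (b i.succ + d i) ⊆ I01 := by
    intro i y hy
    have hv := hfval i y hy.1 hy.2
    rw [← hv]
    exact hfix.maps (hpieceI i ⟨by linarith [hy.1], by linarith [hy.2]⟩)
  have himg_disj : ∀ i j : Fin (r+1), i ≠ j →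
      Disjoint (Ico (b i.castSucc + d i) (b i.succ + d i))
        (Ico (b j.castSucc + d j) (b j.succ + d j)) := by
    intro i j hij
    rw [Set.disjoint_left]
    intro y hyi hyj
    have e1 := hfval i y hyi.1 hyi.2
    have e2 := hfval j y hyj.1 hyj.2
    have heq : y - d i = y - d j := f.injective (e1.trans e2.symm)
    have hdisj := piece_disjoint' hbmono i j hij
    rw [Set.disjoint_left] at hdisj
    refine hdisj (show y - d i ∈ Ico (b i.castSucc) (b i.succ) from
      ⟨by linarith [hyi.1], by linarith [hyi.2]⟩) ?_
    rw [heq]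
    exact ⟨by linarith [hyj.1], by linarith [hyj.2]⟩
  intro i
  have hℓI : b i.castSucc + d i ∈ I01 := by
    have hback : b i.castSucc + d i = f (b i.castSucc) := by simp only [hd]; ring
    rw [hback]
    exact hfix.maps (hbI i)
  have hkey : Ico (0:ℝ) (b i.castSucc + d i)
      = ⋃ k ∈ Finset.univ.filter (fun k : Fin (r+1) =>
          b k.castSucc + d k < b i.castSucc + d i),
          Ico (b k.castSucc + d k) (b k.succ + d k) := by
    ext y
    simp only [Set.mem_iUnion, exists_prop, Finset.mem_filter]
    constructor
    · intro hy
      have hyI : y ∈ I01 := ⟨hy.1, lt_trans hy.2 hℓI.2⟩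
      have hw : f⁻¹ y ∈ I01 := hfix.inv_maps hyI
      obtain ⟨k, hk⟩ := cover hb0 hblast hbmono hw
      have hfw := hbpiece k _ hk
      rw [Equiv.Perm.apply_inv_self] at hfw
      have hyk : y ∈ Ico (b k.castSucc + d k) (b k.succ + d k) := by
        constructor
        · have := hk.1; simp only [hd]; linarith
        · have := hk.2; simp only [hd]; linarith
      exact ⟨k, ⟨Finset.mem_univ k, lt_of_le_of_lt hyk.1 hy.2⟩, hyk⟩
    · rintro ⟨k, ⟨_, hlk⟩, hyk⟩
      constructor
      · exact (himgI k hyk).1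
      · by_contra hge
        push_neg at hge
        have h2 : b i.castSucc + d i ∈ Ico (b i.castSucc + d i) (b i.succ + d i) :=
          ⟨le_refl _, by linarith [hlam i]⟩
        have h1' : b i.castSucc + d i ∈ Ico (b k.castSucc + d k) (b k.succ + d k) :=
          ⟨le_of_lt hlk, lt_of_le_of_lt hge hyk.2⟩
        have hik : i ≠ k := by rintro rfl; exact lt_irrefl _ hlk
        exact Set.disjoint_left.mp (himg_disj i k hik) h2 h1'
  have hvol := congrArg volume hkey
  rw [vol_biUnion_Ico (Finset.univ.filter (fun k : Fin (r+1) =>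
      b k.castSucc + d k < b i.castSucc + d i))
    (fun k => b k.castSucc + d k) (fun k => b k.succ + d k)
    (fun k _ => by linarith [hlam k]) (fun k _ j _ hkj => himg_disj k j hkj)] at hvol
  rw [Real.volume_Ico] at hvol
  have hsumnn : 0 ≤ ∑ k ∈ Finset.univ.filter (fun k : Fin (r+1) =>
      b k.castSucc + d k < b i.castSucc + d i), (b k.succ + d k - (b k.castSucc + d k)) :=
    Finset.sum_nonneg (fun k _ => by linarith [hlam k])
  have hreal : b i.castSucc + d i - 0 = ∑ k ∈ Finset.univ.filter (fun k : Fin (r+1) =>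
      b k.castSucc + d k < b i.castSucc + d i), (b k.succ + d k - (b k.castSucc + d k)) := by
    have h0le : 0 ≤ b i.castSucc + d i - 0 := by
      have := hℓI.1
      linarith
    exact (ENNReal.ofReal_eq_ofReal_iff h0le hsumnn).mp hvol
  have hsummem : (∑ k ∈ Finset.univ.filter (fun k : Fin (r+1) =>
      b k.castSucc + d k < b i.castSucc + d i),
      (b k.succ + d k - (b k.castSucc + d k))) ∈ Δ := by
    refine AddSubgroup.sum_mem Δ (fun k _ => ?_)
    have hr : b k.succ + d k - (b k.castSucc + d k) = b k.succ - b k.castSucc := by ring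
    rw [hr]
    have hsuccΔ : b k.succ ∈ Δ := by
      by_cases h : k.succ = Fin.last (r+1)
      · rw [h, hblast]; exact h1
      · obtain ⟨j, hj⟩ := Fin.exists_castSucc_eq.mpr h
        rw [← hj]; exact hbΔ j
    exact Δ.sub_mem hsuccΔ (hbΔ k)
  have hfin : d i = (b i.castSucc + d i - 0) - b i.castSucc := by ring
  rw [hfin, hreal]
  exact Δ.sub_mem hsummem (hbΔ i)

theorem memGamma_nice {Δ : AddSubgroup ℝ} {f : Equiv.Perm ℝ} (h1 : (1:ℝ) ∈ Δ)
    (hf : MemGamma Δ f) : Nice Δ f := by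
  classical
  obtain ⟨⟨hfix, m, a, ha0, halast, hmono, hpieceE⟩, hdisc⟩ := hf
  have hfix' : Fix01 f := hfix
  choose c hc using hpieceE
  have haI : ∀ i : Fin (m+1), a i.castSucc ∈ I01 := by
    intro i
    constructor
    · have := hmono.monotone (Fin.zero_le i.castSucc); rwa [ha0] at this
    · have := hmono (Fin.castSucc_lt_last i); rwa [halast] at this
  have hpieceI : ∀ i : Fin (m+1), Ico (a i.castSucc) (a i.succ) ⊆ I01 := by
    intro i x hx
    constructor
    · exact le_trans (haI i).1 hx.1
    · have h2 : a i.succ ≤ a (Fin.last (m+1)) := hmono.monotone (Fin.le_last _)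
      rw [halast] at h2
      exact lt_of_lt_of_le hx.2 h2
  have hlam : ∀ i : Fin (m+1), a i.castSucc < a i.succ := fun i => hmono (Fin.castSucc_lt_succ (i := i))
  have hadj : ∀ (i : Fin (m+1)) (hk : (i:ℕ) + 1 < m + 1),
      ContinuousWithinAt (⇑f) I01 (a (⟨(i:ℕ)+1, hk⟩ : Fin (m+1)).castSucc) →
      c ⟨(i:ℕ)+1, hk⟩ = c i := by
    intro i hk hcont
    have ht1 : (⟨(i:ℕ)+1, hk⟩ : Fin (m+1)).castSucc = i.succ := by
      apply Fin.ext; simp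
    have hlow : a i.castSucc < a (⟨(i:ℕ)+1, hk⟩ : Fin (m+1)).castSucc := by
      rw [ht1]; exact hlam i
    have hsub : Ioo (a i.castSucc) (a (⟨(i:ℕ)+1, hk⟩ : Fin (m+1)).castSucc) ⊆ I01 := by
      intro w hw
      refine hpieceI i ⟨le_of_lt hw.1, ?_⟩
      rw [← ht1]; exact hw.2
    haveI hne : (𝓝[Ioo (a i.castSucc) (a (⟨(i:ℕ)+1, hk⟩ : Fin (m+1)).castSucc)]
        (a (⟨(i:ℕ)+1, hk⟩ : Fin (m+1)).castSucc)).NeBot := by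
      rw [← mem_closure_iff_nhdsWithin_neBot, closure_Ioo (ne_of_lt hlow)]
      exact ⟨le_of_lt hlow, le_refl _⟩
    have htend1 : Filter.Tendsto (⇑f)
        (𝓝[Ioo (a i.castSucc) (a (⟨(i:ℕ)+1, hk⟩ : Fin (m+1)).castSucc)]
          (a (⟨(i:ℕ)+1, hk⟩ : Fin (m+1)).castSucc))
        (𝓝 (a (⟨(i:ℕ)+1, hk⟩ : Fin (m+1)).castSucc + c i)) := by
      have hbase : Filter.Tendsto (fun w : ℝ => w + c i)
          (𝓝[Ioo (a i.castSucc) (a (⟨(i:ℕ)+1, hk⟩ : Fin (m+1)).castSucc)]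
            (a (⟨(i:ℕ)+1, hk⟩ : Fin (m+1)).castSucc))
          (𝓝 (a (⟨(i:ℕ)+1, hk⟩ : Fin (m+1)).castSucc + c i)) := by
        refine Filter.Tendsto.mono_left ?_ nhdsWithin_le_nhds
        exact Continuous.tendsto (by continuity) _
      refine hbase.congr' ?_
      refine eventually_nhdsWithin_of_forall (fun w hw => ?_)
      refine (hc i w ⟨le_of_lt hw.1, ?_⟩).symm
      rw [← ht1]; exact hw.2
    have htend2 : Filter.Tendsto (⇑f)
        (𝓝[Ioo (a i.castSucc) (a (⟨(i:ℕ)+1, hk⟩ : Fin (m+1)).castSucc)]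
          (a (⟨(i:ℕ)+1, hk⟩ : Fin (m+1)).castSucc))
        (𝓝 (f (a (⟨(i:ℕ)+1, hk⟩ : Fin (m+1)).castSucc))) :=
      hcont.mono_left (nhdsWithin_mono _ hsub)
    have huniq := tendsto_nhds_unique htend1 htend2
    have hft : f (a (⟨(i:ℕ)+1, hk⟩ : Fin (m+1)).castSucc)
        = a (⟨(i:ℕ)+1, hk⟩ : Fin (m+1)).castSucc + c ⟨(i:ℕ)+1, hk⟩ :=
      hc _ _ ⟨le_refl _, hlam _⟩
    rw [hft] at huniq
    linarith
  have hbreaks : GapConst f (insert 0 ((Finset.univ.filter (fun i : Fin (m+1) =>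
      ¬ContinuousWithinAt (⇑f) I01 (a i.castSucc))).image (fun i => a i.castSucc))) := by
    intro x y hxI hyI hxy hgap'
    obtain ⟨i, hxi⟩ := cover ha0 halast hmono hxI
    obtain ⟨j, hyj⟩ := cover ha0 halast hmono hyI
    have hij : (i:ℕ) ≤ (j:ℕ) := by
      by_contra hlt
      push_neg at hlt
      have hh : a j.succ ≤ a i.castSucc := by
        apply hmono.monotone
        simp only [Fin.le_def, Fin.val_succ, Fin.coe_castSucc]
        omega
      linarith [hxi.1, hyj.2]
    have claim : ∀ (t : ℕ) (hti : (i:ℕ) ≤ t), ∀ (ht : t < m+1), t ≤ (j:ℕ) → c ⟨t, ht⟩ = c i := by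
      intro t hti
      induction t, hti using Nat.le_induction with
      | base =>
          intro ht _
          exact congrArg c (Fin.ext rfl)
      | succ t hti2 ih =>
          intro ht htj
          have ht' : t < m+1 := by omega
          have hcont : ContinuousWithinAt (⇑f) I01 (a (⟨t+1, ht⟩ : Fin (m+1)).castSucc) := by
            by_contra hnc
            have hmem : a (⟨t+1, ht⟩ : Fin (m+1)).castSucc ∈ insert 0
                ((Finset.univ.filter (fun i : Fin (m+1) =>
                  ¬ContinuousWithinAt (⇑f) I01 (a i.castSucc))).image (fun i => a i.castSucc)) :=
              Finset.mem_insert_of_mem (Finset.mem_image_of_mem _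
                (Finset.mem_filter.mpr ⟨Finset.mem_univ _, hnc⟩))
            rcases hgap' _ hmem with h | h
            · have hh : a i.succ ≤ a (⟨t+1, ht⟩ : Fin (m+1)).castSucc := by
                apply hmono.monotone
                simp only [Fin.le_def, Fin.val_succ, Fin.coe_castSucc]
                omega
              linarith [hxi.2]
            · have hh : a (⟨t+1, ht⟩ : Fin (m+1)).castSucc ≤ a j.castSucc := by
                apply hmono.monotone
                simp only [Fin.le_def, Fin.coe_castSucc]
                omega
              linarith [hyj.1]
          have hstep : c ⟨t+1, ht⟩ = c ⟨t, ht'⟩ := hadj ⟨t, ht'⟩ ht hcont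
          rw [hstep]
          exact ih ht' (by omega)
    have hcj : c j = c i := claim (j:ℕ) hij j.isLt (le_refl _)
    have hx' := hc i x hxi
    have hy' := hc j y hyj
    rw [hx', hy', hcj]
    ring
  have hsub : ↑(insert 0 ((Finset.univ.filter (fun i : Fin (m+1) =>
      ¬ContinuousWithinAt (⇑f) I01 (a i.castSucc))).image (fun i => a i.castSucc)))
      ⊆ I01 ∩ (Δ : Set ℝ) := by
    intro w hw
    simp only [Finset.coe_insert, Set.mem_insert_iff, Finset.mem_coe, Finset.mem_image,
      Finset.mem_filter] at hw
    rcases hw with rfl | ⟨i, ⟨_, hnc⟩, rfl⟩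
    · exact ⟨⟨le_refl 0, zero_lt_one⟩, Δ.zero_mem⟩
    · exact ⟨haI i, hdisc _ (haI i) hnc⟩
  have hsubI : ↑(insert 0 ((Finset.univ.filter (fun i : Fin (m+1) =>
      ¬ContinuousWithinAt (⇑f) I01 (a i.castSucc))).image (fun i => a i.castSucc)))
      ⊆ I01 := fun w hw => (hsub hw).1
  have h0mem : (0:ℝ) ∈ insert 0 ((Finset.univ.filter (fun i : Fin (m+1) =>
      ¬ContinuousWithinAt (⇑f) I01 (a i.castSucc))).image (fun i => a i.castSucc)) :=
    Finset.mem_insert_self _ _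
  obtain ⟨r, b, hb0, hblast, hbmono, hbmem, hbpiece⟩ :=
    partition_of_gap _ hsubI h0mem hbreaks
  have hbΔ : ∀ i : Fin (r+1), b i.castSucc ∈ Δ := fun i => (hsub (hbmem i)).2
  have hdΔ := const_mem_delta h1 hfix' b hb0 hblast hbmono hbΔ hbpiece
  refine ⟨hfix', ?_, _, hsub, h0mem, hbreaks⟩
  intro x hx
  obtain ⟨k, hk⟩ := cover hb0 hblast hbmono hx
  have := hbpiece k x hk
  have heq : f x - x = f (b k.castSucc) - b k.castSucc := by rw [this]; ring
  rw [heq]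
  exact hdΔ k

structure NicePart (Δ : AddSubgroup ℝ) (f : Equiv.Perm ℝ) where
  m : ℕ
  a : Fin (m + 2) → ℝ
  c : Fin (m + 1) → ℝ
  ha0 : a 0 = 0
  halast : a (Fin.last (m+1)) = 1
  hmono : StrictMono a
  haΔ : ∀ i, a i ∈ Δ
  hcΔ : ∀ i, c i ∈ Δ
  hpiece : ∀ (i : Fin (m+1)), ∀ x ∈ Set.Ico (a i.castSucc) (a i.succ), f x = x + c i

theorem Nice.part (h1 : (1:ℝ) ∈ Δ) (hf : Nice Δ f) : Nonempty (NicePart Δ f) := by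
  obtain ⟨hfix, hconst, s, hs, h0s, hgap⟩ := hf
  have hsI : ↑s ⊆ I01 := fun t ht => (hs ht).1
  obtain ⟨m, a, h0, hlast, hmono, hmem, hpiece⟩ := partition_of_gap s hsI h0s hgap
  refine ⟨⟨m, a, fun i => f (a i.castSucc) - a i.castSucc, h0, hlast, hmono, ?_, ?_, hpiece⟩⟩
  · intro i
    by_cases h : i = Fin.last (m+1)
    · rw [h, hlast]; exact h1
    · obtain ⟨j, hj⟩ := Fin.exists_castSucc_eq.mpr h
      rw [← hj]; exact (hs (hmem j)).2
  · intro i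
    exact hconst _ (hsI (hmem i))

namespace NicePart

variable {Δ : AddSubgroup ℝ} {f : Equiv.Perm ℝ} (P : NicePart Δ f)

def F : Finset (Fin (P.m+1)) := Finset.univ.filter (fun i => P.c i ≠ 0)

def len : ℝ := ∑ i ∈ P.F, (P.a i.succ - P.a i.castSucc)

def U : Set ℝ := ⋃ i ∈ P.F, Ico (P.a i.castSucc) (P.a i.succ)

lemma mem_F {i : Fin (P.m+1)} : i ∈ P.F ↔ P.c i ≠ 0 := by
  simp [F]

lemma mem_U {x : ℝ} : x ∈ P.U ↔ ∃ i, P.c i ≠ 0 ∧ x ∈ Ico (P.a i.castSucc) (P.a i.succ) := by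
  simp only [U, mem_iUnion, mem_F, exists_prop]

lemma lam_pos (i : Fin (P.m+1)) : 0 < P.a i.succ - P.a i.castSucc := by
  have := P.hmono (Fin.castSucc_lt_succ (i := i))
  linarith

lemma succ_le (i j : Fin (P.m+1)) (hij : i < j) : P.a i.succ ≤ P.a j.castSucc := by
  apply P.hmono.monotone
  simp only [Fin.le_def, Fin.val_succ, Fin.coe_castSucc]
  exact hij

lemma piece_disjoint (i j : Fin (P.m+1)) (hij : i ≠ j) :
    Disjoint (Ico (P.a i.castSucc) (P.a i.succ)) (Ico (P.a j.castSucc) (P.a j.succ)) := by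
  rw [Set.Ico_disjoint_Ico]
  rcases hij.lt_or_gt with h | h
  · exact le_trans (min_le_left _ _) (le_trans (P.succ_le i j h) (le_max_right _ _))
  · exact le_trans (min_le_right _ _) (le_trans (P.succ_le j i h) (le_max_left _ _))

lemma a_mem_I01 (i : Fin (P.m+1)) : P.a i.castSucc ∈ I01 := by
  constructor
  · have := P.hmono.monotone (Fin.zero_le i.castSucc)
    rw [P.ha0] at this; exact this
  · have : i.castSucc < Fin.last (P.m+1) := Fin.castSucc_lt_last i
    have := P.hmono this
    rw [P.halast] at this; exact this

lemma pieceI (i : Fin (P.m+1)) : Ico (P.a i.castSucc) (P.a i.succ) ⊆ I01 := by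
  intro x hx
  constructor
  · exact le_trans (P.a_mem_I01 i).1 hx.1
  · have h2 : P.a i.succ ≤ P.a (Fin.last (P.m+1)) := P.hmono.monotone (Fin.le_last _)
    rw [P.halast] at h2
    exact lt_of_lt_of_le hx.2 h2

lemma cell_sub_U {i : Fin (P.m+1)} (hi : i ∈ P.F) :
    Ico (P.a i.castSucc) (P.a i.succ) ⊆ P.U := by
  intro x hx
  exact P.mem_U.mpr ⟨i, P.mem_F.mp hi, hx⟩

lemma fix_outside (hfix : Fix01 f) {x : ℝ} (hx : x ∉ P.U) : f x = x := by
  by_cases h : x ∈ I01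
  · obtain ⟨i, hi⟩ := cover P.ha0 P.halast P.hmono h
    by_cases hc : P.c i = 0
    · rw [P.hpiece i x hi, hc, add_zero]
    · exact absurd (P.mem_U.mpr ⟨i, hc, hi⟩) hx
  · exact hfix x h

lemma mem_U_move {x : ℝ} (hx : x ∈ P.U) : f x ≠ x := by
  obtain ⟨i, hi, hx⟩ := P.mem_U.mp hx
  rw [P.hpiece i x hx]
  intro h
  exact hi (by linarith)

lemma measU : MeasurableSet P.U :=
  MeasurableSet.biUnion (Set.to_countable _) (fun _ _ => measurableSet_Ico)

lemma volU : volume P.U = ENNReal.ofReal P.len := by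
  show volume (⋃ i ∈ P.F, Ico (P.a i.castSucc) (P.a i.succ))
      = ENNReal.ofReal (∑ i ∈ P.F, (P.a i.succ - P.a i.castSucc))
  exact vol_biUnion_Ico P.F (fun i => P.a i.castSucc) (fun i => P.a i.succ)
    (fun i _ => by have := P.lam_pos i; linarith)
    (fun i _ j _ hij => P.piece_disjoint i j hij)

lemma len_nonneg : 0 ≤ P.len :=
  Finset.sum_nonneg (fun i _ => le_of_lt (P.lam_pos i))

lemma sum_lam : ∑ i : Fin (P.m+1), (P.a i.succ - P.a i.castSucc) = 1 := by
  set b : ℕ → ℝ := fun k => if h : k < P.m + 2 then P.a ⟨k, h⟩ else 1 with hbdef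
  have h2 : ∀ i : Fin (P.m+1), P.a i.succ - P.a i.castSucc = b ((i:ℕ)+1) - b (i:ℕ) := by
    intro i
    have hi1 : (i:ℕ)+1 < P.m+2 := by omega
    have hi2 : (i:ℕ) < P.m+2 := by omega
    have e1 : b ((i:ℕ)+1) = P.a i.succ := by
      simp only [hbdef]
      rw [dif_pos hi1]
      exact congrArg P.a (by apply Fin.ext; simp)
    have e2 : b (i:ℕ) = P.a i.castSucc := by
      simp only [hbdef]
      rw [dif_pos hi2]
      exact congrArg P.a (by apply Fin.ext; simp)
    rw [e1, e2]
  have hc := Finset.sum_congr rfl (fun i (_ : i ∈ Finset.univ) => h2 i)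
  rw [hc, Fin.sum_univ_eq_sum_range (fun k => b (k+1) - b k) (P.m+1),
    Finset.sum_range_sub b (P.m+1)]
  have hm1 : P.m + 1 < P.m + 2 := by omega
  have hm0 : 0 < P.m + 2 := by omega
  have e3 : b (P.m+1) = 1 := by
    simp only [hbdef]
    rw [dif_pos hm1]
    have h : (⟨P.m+1, hm1⟩ : Fin (P.m+2)) = Fin.last (P.m+1) := rfl
    rw [h, P.halast]
  have e4 : b 0 = 0 := by
    simp only [hbdef]
    rw [dif_pos hm0]
    have h : (⟨0, hm0⟩ : Fin (P.m+2)) = 0 := rfl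
    rw [h, P.ha0]
  rw [e3, e4]
  ring

lemma len_le_one : P.len ≤ 1 := by
  calc P.len ≤ ∑ i : Fin (P.m+1), (P.a i.succ - P.a i.castSucc) :=
        Finset.sum_le_sum_of_subset_of_nonneg (Finset.filter_subset _ _)
          (fun i _ _ => le_of_lt (P.lam_pos i))
  _ = 1 := P.sum_lam

lemma len_le_of_fix {u : Equiv.Perm ℝ} (Q : NicePart Δ u) (W : Set ℝ)
    (hW : ∀ x, x ∉ W → u x = x) : ENNReal.ofReal Q.len ≤ volume W := by
  rw [← Q.volU]
  refine measure_mono (fun x hx => ?_)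
  by_contra h
  exact Q.mem_U_move hx (hW x h)

end NicePart

theorem exists_indep {β : Type*} (V : Finset β) (R : β → β → Prop)
    (h1 : ∀ v ∈ V, ∀ W ⊆ V, (∀ u ∈ W, R v u) → W.card ≤ 2)
    (h2 : ∀ v ∈ V, ∀ W ⊆ V, (∀ u ∈ W, R u v) → W.card ≤ 2) :
    ∃ S ⊆ V, (∀ u ∈ S, ∀ v ∈ S, u ≠ v → ¬ R u v) ∧ V.card ≤ 5 * S.card := by
  classical
  revert h1 h2
  induction V using Finset.strongInduction with
  | _ V ih =>
    intro h1 h2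
    rcases V.eq_empty_or_nonempty with rfl | ⟨v, hv⟩
    · exact ⟨∅, by simp⟩
    have hNsub : V.filter (fun u => R v u ∨ R u v ∨ u = v) ⊆ V := Finset.filter_subset _ _
    have hNcard : (V.filter (fun u => R v u ∨ R u v ∨ u = v)).card ≤ 5 := by
      have hsub : V.filter (fun u => R v u ∨ R u v ∨ u = v) ⊆
          ((V.filter fun u => R v u) ∪ (V.filter fun u => R u v)) ∪ {v} := by
        intro u hu
        rw [Finset.mem_filter] at hu
        rcases hu.2 with h | h | h
        · exact Finset.mem_union_left _ (Finset.mem_union_left _ (Finset.mem_filter.mpr ⟨hu.1, h⟩))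
        · exact Finset.mem_union_left _ (Finset.mem_union_right _ (Finset.mem_filter.mpr ⟨hu.1, h⟩))
        · subst h; exact Finset.mem_union_right _ (Finset.mem_singleton_self _)
      have c1 := Finset.card_le_card hsub
      have c2 := Finset.card_union_le ((V.filter fun u => R v u) ∪ (V.filter fun u => R u v))
        ({v} : Finset β)
      have c3 := Finset.card_union_le (V.filter fun u => R v u) (V.filter fun u => R u v)
      have c4 := h1 v hv (V.filter fun u => R v u) (Finset.filter_subset _ _)
        (fun u hu => (Finset.mem_filter.mp hu).2)
      have c5 := h2 v hv (V.filter fun u => R u v) (Finset.filter_subset _ _)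
        (fun u hu => (Finset.mem_filter.mp hu).2)
      have c6 : ({v} : Finset β).card = 1 := Finset.card_singleton v
      omega
    have hvN : v ∈ V.filter (fun u => R v u ∨ R u v ∨ u = v) :=
      Finset.mem_filter.mpr ⟨hv, Or.inr (Or.inr rfl)⟩
    have hWss : V \ V.filter (fun u => R v u ∨ R u v ∨ u = v) ⊂ V := by
      refine (Finset.ssubset_iff_of_subset Finset.sdiff_subset).mpr ⟨v, hv, ?_⟩
      simp only [Finset.mem_sdiff, not_and, not_not]
      intro _
      exact hvN
    obtain ⟨S, hSW, hSind, hScard⟩ := ih _ hWss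
      (fun u hu W hW hWR => h1 u (Finset.sdiff_subset hu) W (hW.trans Finset.sdiff_subset) hWR)
      (fun u hu W hW hWR => h2 u (Finset.sdiff_subset hu) W (hW.trans Finset.sdiff_subset) hWR)
    refine ⟨insert v S, ?_, ?_, ?_⟩
    · intro u hu
      rcases Finset.mem_insert.mp hu with rfl | hu
      · exact hv
      · exact Finset.sdiff_subset (hSW hu)
    · intro u hu w hw hne
      rcases Finset.mem_insert.mp hu with heq1 | hu'
      · subst heq1
        rcases Finset.mem_insert.mp hw with heq2 | hw'
        · exact absurd heq2.symm hne
        · have hwV := hSW hw'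
          intro hR
          exact (Finset.mem_sdiff.mp hwV).2
            (Finset.mem_filter.mpr ⟨(Finset.mem_sdiff.mp hwV).1, Or.inl hR⟩)
      · rcases Finset.mem_insert.mp hw with heq2 | hw'
        · subst heq2
          have huV := hSW hu'
          intro hR
          exact (Finset.mem_sdiff.mp huV).2
            (Finset.mem_filter.mpr ⟨(Finset.mem_sdiff.mp huV).1, Or.inr (Or.inl hR)⟩)
        · exact hSind u hu' w hw' hne
    · have hvS : v ∉ S := fun h => (Finset.mem_sdiff.mp (hSW h)).2 hvN
      rw [Finset.card_insert_of_notMem hvS]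
      have hsplit : V.card ≤ (V \ V.filter (fun u => R v u ∨ R u v ∨ u = v)).card
          + (V.filter (fun u => R v u ∨ R u v ∨ u = v)).card := by
        have hsub : V ⊆ (V \ V.filter (fun u => R v u ∨ R u v ∨ u = v))
            ∪ V.filter (fun u => R v u ∨ R u v ∨ u = v) := by
          intro u hu
          by_cases h : u ∈ V.filter (fun u => R v u ∨ R u v ∨ u = v)
          · exact Finset.mem_union_right _ h
          · exact Finset.mem_union_left _ (Finset.mem_sdiff.mpr ⟨hu, h⟩)
        exact le_trans (Finset.card_le_card hsub) (Finset.card_union_le _ _)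
      omega

lemma card_le_two_window {β : Type*} (S : Finset β) (ep : β → ℝ) (δ w : ℝ)
    (hsep : ∀ a ∈ S, ∀ b ∈ S, a ≠ b → δ ≤ |ep a - ep b|)
    (hwin : ∀ a ∈ S, w - δ < ep a ∧ ep a < w + δ) : S.card ≤ 2 := by
  by_contra h
  push_neg at h
  obtain ⟨a, ha, b, hb, c, hc, hab, hac, hbc⟩ := Finset.two_lt_card.mp h
  have key : ∀ x ∈ S, ∀ y ∈ S, ∀ z ∈ S, x ≠ y → x ≠ z → y ≠ z →
      ep x ≤ ep y → ep y ≤ ep z → False := by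
    intro x hx y hy z hz hxy hxz hyz hle1 hle2
    have d1 := hsep x hx y hy hxy
    have d2 := hsep y hy z hz hyz
    rw [abs_of_nonpos (by linarith : ep x - ep y ≤ 0)] at d1
    rw [abs_of_nonpos (by linarith : ep y - ep z ≤ 0)] at d2
    have w1 := (hwin x hx).1
    have w2 := (hwin z hz).2
    linarith
  rcases le_total (ep a) (ep b) with h1 | h1
  · rcases le_total (ep b) (ep c) with h2 | h2
    · exact key a ha b hb c hc hab hac hbc h1 h2
    · rcases le_total (ep a) (ep c) with h4 | h4
      · exact key a ha c hc b hb hac hab (Ne.symm hbc) h4 h2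
      · exact key c hc a ha b hb (Ne.symm hac) (Ne.symm hbc) hab h4 h1
  · rcases le_total (ep a) (ep c) with h2 | h2
    · exact key b hb a ha c hc (Ne.symm hab) hbc hac h1 h2
    · rcases le_total (ep b) (ep c) with h4 | h4
      · exact key b hb c hc a ha hbc (Ne.symm hab) (Ne.symm hac) h4 h2
      · exact key c hc b hb a ha (Ne.symm hbc) (Ne.symm hac) (Ne.symm hab) h4 h1

theorem involution_builder (Δ : AddSubgroup ℝ) (δ : ℝ) (hδ0 : 0 < δ) (hδΔ : δ ∈ Δ)
    (T : Finset (ℝ × ℝ))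
    (hcell : ∀ p ∈ T, Ico p.1 (p.1 + δ) ⊆ I01 ∧ Ico (p.1+p.2) (p.1+p.2+δ) ⊆ I01 ∧ p.1 ∈ Δ ∧ p.2 ∈ Δ)
    (hdisj1 : ∀ p ∈ T, ∀ q ∈ T, p ≠ q → Disjoint (Ico p.1 (p.1+δ)) (Ico q.1 (q.1+δ)))
    (hdisj2 : ∀ p ∈ T, ∀ q ∈ T, p ≠ q → Disjoint (Ico (p.1+p.2) (p.1+p.2+δ)) (Ico (q.1+q.2) (q.1+q.2+δ)))
    (hdisj3 : ∀ p ∈ T, ∀ q ∈ T, Disjoint (Ico p.1 (p.1+δ)) (Ico (q.1+q.2) (q.1+q.2+δ))) :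
    ∃ ι : Equiv.Perm ℝ, Nice Δ ι ∧ ι * ι = 1 ∧
      (∀ p ∈ T, ∀ x ∈ Ico p.1 (p.1+δ), ι x = x + p.2) ∧
      (∀ p ∈ T, ∀ x ∈ Ico (p.1+p.2) (p.1+p.2+δ), ι x = x - p.2) ∧
      (∀ x : ℝ, (∀ p ∈ T, x ∉ Ico p.1 (p.1+δ) ∧ x ∉ Ico (p.1+p.2) (p.1+p.2+δ)) → ι x = x) := by
  classical
  set φ : ℝ → ℝ := fun x => x + ∑ p ∈ T, ((if x ∈ Ico p.1 (p.1+δ) then p.2 else 0)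
    + (if x ∈ Ico (p.1+p.2) (p.1+p.2+δ) then -p.2 else 0)) with hφ
  have hφd : ∀ x, φ x - x = ∑ p ∈ T, ((if x ∈ Ico p.1 (p.1+δ) then p.2 else 0)
      + (if x ∈ Ico (p.1+p.2) (p.1+p.2+δ) then -p.2 else 0)) := by
    intro x; simp only [hφ]; ring
  have E1 : ∀ p ∈ T, ∀ x ∈ Ico p.1 (p.1+δ), φ x = x + p.2 := by
    intro p hp x hx
    have hsum : ∑ q ∈ T, ((if x ∈ Ico q.1 (q.1+δ) then q.2 else 0)
        + (if x ∈ Ico (q.1+q.2) (q.1+q.2+δ) then -q.2 else 0)) = p.2 := by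
      rw [Finset.sum_eq_single p]
      · rw [if_pos hx, if_neg (Set.disjoint_left.mp (hdisj3 p hp p hp) hx)]
        ring
      · intro q hq hqp
        rw [if_neg (Set.disjoint_right.mp (hdisj1 q hq p hp hqp) hx),
          if_neg (Set.disjoint_left.mp (hdisj3 p hp q hq) hx)]
        ring
      · intro h; exact absurd hp h
    have := hφd x
    rw [hsum] at this
    linarith
  have E2 : ∀ p ∈ T, ∀ x ∈ Ico (p.1+p.2) (p.1+p.2+δ), φ x = x - p.2 := by
    intro p hp x hx
    have hsum : ∑ q ∈ T, ((if x ∈ Ico q.1 (q.1+δ) then q.2 else 0)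
        + (if x ∈ Ico (q.1+q.2) (q.1+q.2+δ) then -q.2 else 0)) = -p.2 := by
      rw [Finset.sum_eq_single p]
      · rw [if_pos hx, if_neg (Set.disjoint_right.mp (hdisj3 p hp p hp) hx)]
        ring
      · intro q hq hqp
        rw [if_neg (Set.disjoint_right.mp (hdisj3 q hq p hp) hx),
          if_neg (Set.disjoint_right.mp (hdisj2 q hq p hp hqp) hx)]
        ring
      · intro h; exact absurd hp h
    have := hφd x
    rw [hsum] at this
    linarith
  have E0 : ∀ x : ℝ, (∀ p ∈ T, x ∉ Ico p.1 (p.1+δ) ∧ x ∉ Ico (p.1+p.2) (p.1+p.2+δ)) → φ x = x := by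
    intro x hx
    have hsum : ∑ q ∈ T, ((if x ∈ Ico q.1 (q.1+δ) then q.2 else 0)
        + (if x ∈ Ico (q.1+q.2) (q.1+q.2+δ) then -q.2 else 0)) = 0 := by
      refine Finset.sum_eq_zero (fun q hq => ?_)
      rw [if_neg (hx q hq).1, if_neg (hx q hq).2]
      ring
    have := hφd x
    rw [hsum] at this
    linarith
  have hinv : ∀ x, φ (φ x) = x := by
    intro x
    by_cases hc : ∃ p, p ∈ T ∧ x ∈ Ico p.1 (p.1+δ)
    · obtain ⟨p, hp, hx⟩ := hc
      rw [E1 p hp x hx]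
      have hx2 : x + p.2 ∈ Ico (p.1+p.2) (p.1+p.2+δ) :=
        ⟨by linarith [hx.1], by linarith [hx.2]⟩
      rw [E2 p hp _ hx2]
      ring
    by_cases hc2 : ∃ p, p ∈ T ∧ x ∈ Ico (p.1+p.2) (p.1+p.2+δ)
    · obtain ⟨p, hp, hx⟩ := hc2
      rw [E2 p hp x hx]
      have hx2 : x - p.2 ∈ Ico p.1 (p.1+δ) := ⟨by linarith [hx.1], by linarith [hx.2]⟩
      rw [E1 p hp _ hx2]
      ring
    · push_neg at hc hc2
      have h0 : φ x = x := E0 x (fun p hp => ⟨hc p hp, hc2 p hp⟩)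
      rw [h0, h0]
  set ι : Equiv.Perm ℝ := ⟨φ, φ, hinv, hinv⟩ with hι
  have hιa : ∀ x, ι x = φ x := fun x => rfl
  have hNice : Nice Δ ι := by
    refine ⟨?_, ?_, ?_⟩
    · intro x hx
      rw [hιa]
      refine E0 x (fun p hp => ⟨fun h => hx ((hcell p hp).1 h), fun h => hx ((hcell p hp).2.1 h)⟩)
    · intro x _
      rw [hιa, hφd x]
      refine AddSubgroup.sum_mem Δ (fun q hq => ?_)
      refine Δ.add_mem ?_ ?_
      · by_cases h : x ∈ Ico q.1 (q.1+δ)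
        · rw [if_pos h]; exact (hcell q hq).2.2.2
        · rw [if_neg h]; exact Δ.zero_mem
      · by_cases h : x ∈ Ico (q.1+q.2) (q.1+q.2+δ)
        · rw [if_pos h]; exact Δ.neg_mem (hcell q hq).2.2.2
        · rw [if_neg h]; exact Δ.zero_mem
    · refine ⟨insert 0 (T.biUnion (fun p =>
        ({p.1, p.1+δ, p.1+p.2, p.1+p.2+δ} : Finset ℝ).filter (fun b => b ∈ I01))), ?_, Finset.mem_insert_self _ _, ?_⟩
      · intro b hb
        simp only [Finset.coe_insert, Set.mem_insert_iff, Finset.mem_coe, Finset.mem_biUnion,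
          Finset.mem_filter, Finset.mem_insert, Finset.mem_singleton] at hb
        rcases hb with rfl | ⟨p, hp, hbm, hbI⟩
        · exact ⟨⟨le_refl 0, zero_lt_one⟩, Δ.zero_mem⟩
        · refine ⟨hbI, ?_⟩
          have h1 := (hcell p hp).2.2.1
          have h2 := (hcell p hp).2.2.2
          rcases hbm with rfl | rfl | rfl | rfl
          · exact h1
          · exact Δ.add_mem h1 hδΔ
          · exact Δ.add_mem h1 h2
          · exact Δ.add_mem (Δ.add_mem h1 h2) hδΔ
      · intro x y hxI hyI hxy hgap'
        have memiff : ∀ q : ℝ, Ico q (q+δ) ⊆ I01 →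
            (q ∈ I01 → q ∈ insert 0 (T.biUnion (fun p =>
              ({p.1, p.1+δ, p.1+p.2, p.1+p.2+δ} : Finset ℝ).filter (fun b => b ∈ I01)))) →
            (q+δ ∈ I01 → q+δ ∈ insert 0 (T.biUnion (fun p =>
              ({p.1, p.1+δ, p.1+p.2, p.1+p.2+δ} : Finset ℝ).filter (fun b => b ∈ I01)))) →
            (x ∈ Ico q (q+δ) ↔ y ∈ Ico q (q+δ)) := by
          intro q hsub hq1 hq2
          constructor
          · intro hxq
            by_contra hyq
            have hyge : q + δ ≤ y := by
              rcases lt_or_ge y q with h | h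
              · linarith [hxq.1]
              · rcases lt_or_ge y (q+δ) with h2 | h2
                · exact absurd ⟨h, h2⟩ hyq
                · exact h2
            have hbI : q + δ ∈ I01 := ⟨by linarith [hxq.2, hxI.1], lt_of_le_of_lt hyge hyI.2⟩
            rcases hgap' (q+δ) (hq2 hbI) with h | h
            · linarith [hxq.2]
            · linarith
          · intro hyq
            by_contra hxq
            have hxlt : x < q := by
              rcases lt_or_ge x q with h | h
              · exact h
              · exfalso
                rcases lt_or_ge x (q+δ) with h2 | h2
                · exact hxq ⟨h, h2⟩
                · linarith [hyq.2]
            have hbI : q ∈ I01 := hsub ⟨le_refl q, by linarith⟩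
            rcases hgap' q (hq1 hbI) with h | h
            · linarith
            · linarith [hyq.1]
        have hmem1 : ∀ p ∈ T, ∀ b ∈ ({p.1, p.1+δ, p.1+p.2, p.1+p.2+δ} : Finset ℝ), b ∈ I01 →
            b ∈ insert 0 (T.biUnion (fun p =>
              ({p.1, p.1+δ, p.1+p.2, p.1+p.2+δ} : Finset ℝ).filter (fun b => b ∈ I01))) := by
          intro p hp b hb hbI
          exact Finset.mem_insert_of_mem (Finset.mem_biUnion.mpr ⟨p, hp,
            Finset.mem_filter.mpr ⟨hb, hbI⟩⟩)
        rw [hιa, hιa, hφd, hφd]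
        refine Finset.sum_congr rfl (fun p hp => ?_)
        have i1 : x ∈ Ico p.1 (p.1+δ) ↔ y ∈ Ico p.1 (p.1+δ) := by
          refine memiff p.1 (hcell p hp).1
            (fun h => hmem1 p hp p.1 (by simp) h)
            (fun h => hmem1 p hp (p.1+δ) (by simp) h)
        have i2 : x ∈ Ico (p.1+p.2) (p.1+p.2+δ) ↔ y ∈ Ico (p.1+p.2) (p.1+p.2+δ) := by
          refine memiff (p.1+p.2) (hcell p hp).2.1
            (fun h => hmem1 p hp (p.1+p.2) (by simp) h)
            (fun h => hmem1 p hp (p.1+p.2+δ) (by simp) h)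
        rw [if_congr i1 rfl rfl, if_congr i2 rfl rfl]
  refine ⟨ι, hNice, ?_, fun p hp x hx => by rw [hιa]; exact E1 p hp x hx,
    fun p hp x hx => by rw [hιa]; exact E2 p hp x hx,
    fun x hx => by rw [hιa]; exact E0 x hx⟩
  · ext x
    simp only [Equiv.Perm.mul_apply, Equiv.Perm.one_apply]
    rw [hιa, hιa]
    exact hinv x

theorem shrink_step (Δ : AddSubgroup ℝ) (hden : Dense (Δ : Set ℝ)) {f : Equiv.Perm ℝ}
    (hf : Nice Δ f) (P : NicePart Δ f) {ε : ℝ} (hε : 0 < ε) :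
    ∃ ι : Equiv.Perm ℝ, Nice Δ ι ∧ ι * ι = 1 ∧
      ∃ W : Set ℝ, (∀ x, x ∉ W → (ι * f) x = x) ∧ MeasurableSet W ∧
        volume W ≤ ENNReal.ofReal (4/5 * P.len + ε) := by
  classical
  rcases Finset.eq_empty_or_nonempty P.F with hFe | hFne
  · refine ⟨1, Nice.one, by simp, ∅, ?_, MeasurableSet.empty, ?_⟩
    · intro x _
      have hU : x ∉ P.U := by
        intro h
        obtain ⟨i, hi, _⟩ := P.mem_U.mp h
        have h2 : i ∈ P.F := P.mem_F.mpr hi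
        rw [hFe] at h2
        exact absurd h2 (Finset.notMem_empty i)
      have := P.fix_outside hf.1 hU
      simp only [Equiv.Perm.mul_apply, Equiv.Perm.one_apply]
      exact this
    · simp only [measure_empty]
      have : (0:ℝ) ≤ 4/5 * P.len + ε := by nlinarith [P.len_nonneg]
      positivity
  have hGne : (P.F.image (fun i => |P.c i|)).Nonempty := hFne.image _
  have hcmin_pos : 0 < (P.F.image (fun i => |P.c i|)).min' hGne := by
    obtain ⟨i, hi, he⟩ := Finset.mem_image.mp ((P.F.image (fun i => |P.c i|)).min'_mem hGne)
    rw [← he]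
    exact abs_pos.mpr (P.mem_F.mp hi)
  have hcmin_le : ∀ i ∈ P.F, (P.F.image (fun i => |P.c i|)).min' hGne ≤ |P.c i| :=
    fun i hi => Finset.min'_le _ _ (Finset.mem_image_of_mem _ hi)
  have hMpos : (0:ℝ) < (P.m+1 : ℝ) := by positivity
  have hbound : (0:ℝ) < min ((P.F.image (fun i => |P.c i|)).min' hGne) (ε / (P.m+1)) :=
    lt_min hcmin_pos (by positivity)
  obtain ⟨δ, hδΔ, hδmem⟩ := hden.exists_between hbound
  have hδ0 : 0 < δ := hδmem.1
  have hδcmin : ∀ i ∈ P.F, δ < |P.c i| :=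
    fun i hi => lt_of_lt_of_le hδmem.2 (le_trans (min_le_left _ _) (hcmin_le i hi))
  have hδε : (P.m+1 : ℝ) * δ < ε := by
    have h := lt_of_lt_of_le hδmem.2 (min_le_right _ _)
    rw [lt_div_iff₀ hMpos] at h
    linarith
  set K : Finset ((_ : Fin (P.m+1)) × ℕ) :=
    P.F.sigma (fun i => Finset.range (⌊(P.a i.succ - P.a i.castSucc) / δ⌋₊)) with hK
  set q : (_ : Fin (P.m+1)) × ℕ → ℝ := fun e => P.a e.1.castSucc + e.2 * δ with hqdef
  have hqlb : ∀ e : (_ : Fin (P.m+1)) × ℕ, P.a e.1.castSucc ≤ q e := by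
    intro e
    simp only [hqdef]
    have h : (0:ℝ) ≤ (e.2 : ℝ) * δ := by positivity
    linarith
  have hcell_sub : ∀ e ∈ K, Ico (q e) (q e + δ) ⊆ Ico (P.a e.1.castSucc) (P.a e.1.succ) := by
    intro e he x hx
    rcases Finset.mem_sigma.mp he with ⟨he1, he2⟩
    constructor
    · exact le_trans (hqlb e) hx.1
    · have hj : (e.2 : ℝ) + 1 ≤ (⌊(P.a e.1.succ - P.a e.1.castSucc) / δ⌋₊ : ℝ) := by
        have h := Finset.mem_range.mp he2
        exact_mod_cast h
      have hNle : (⌊(P.a e.1.succ - P.a e.1.castSucc) / δ⌋₊ : ℝ) * δ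
          ≤ P.a e.1.succ - P.a e.1.castSucc := by
        have h1 : (⌊(P.a e.1.succ - P.a e.1.castSucc) / δ⌋₊ : ℝ)
            ≤ (P.a e.1.succ - P.a e.1.castSucc) / δ :=
          Nat.floor_le (div_nonneg (le_of_lt (P.lam_pos e.1)) (le_of_lt hδ0))
        calc (⌊(P.a e.1.succ - P.a e.1.castSucc) / δ⌋₊ : ℝ) * δ
            ≤ ((P.a e.1.succ - P.a e.1.castSucc) / δ) * δ :=
              mul_le_mul_of_nonneg_right h1 (le_of_lt hδ0)
        _ = P.a e.1.succ - P.a e.1.castSucc := by field_simp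
      have hqd : q e + δ ≤ P.a e.1.succ := by
        simp only [hqdef]
        have h2 : ((e.2 : ℝ) + 1) * δ ≤ (⌊(P.a e.1.succ - P.a e.1.castSucc) / δ⌋₊ : ℝ) * δ :=
          mul_le_mul_of_nonneg_right hj (le_of_lt hδ0)
        nlinarith
      linarith [hx.2]
  have hcell_F : ∀ e ∈ K, e.1 ∈ P.F := fun e he => (Finset.mem_sigma.mp he).1
  have hcell_shift : ∀ e ∈ K, ∀ x ∈ Ico (q e) (q e + δ), f x = x + P.c e.1 :=
    fun e he x hx => P.hpiece e.1 x (hcell_sub e he hx)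
  have hcell_I01 : ∀ e ∈ K, Ico (q e) (q e + δ) ⊆ I01 :=
    fun e he => subset_trans (hcell_sub e he) (P.pieceI e.1)
  have hcell_U : ∀ e ∈ K, Ico (q e) (q e + δ) ⊆ P.U :=
    fun e he => subset_trans (hcell_sub e he) (P.cell_sub_U (hcell_F e he))
  have hcell_disj : ∀ e ∈ K, ∀ e' ∈ K, e ≠ e' →
      Disjoint (Ico (q e) (q e + δ)) (Ico (q e') (q e' + δ)) := by
    intro e he e' he' hne
    by_cases hsame : e.1 = e'.1
    · have hjne : e.2 ≠ e'.2 := by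
        intro h
        exact hne (Sigma.ext hsame (heq_of_eq h))
      rw [Set.Ico_disjoint_Ico]
      rcases lt_or_gt_of_ne hjne with h | h
      · have hle : q e + δ ≤ q e' := by
          simp only [hqdef, hsame]
          have h3 : ((e.2:ℝ) + 1) * δ ≤ (e'.2:ℝ) * δ := by
            refine mul_le_mul_of_nonneg_right ?_ (le_of_lt hδ0)
            exact_mod_cast h
          nlinarith
        exact le_trans (min_le_left _ _) (le_trans hle (le_max_right _ _))
      · have hle : q e' + δ ≤ q e := by
          simp only [hqdef, hsame]
          have h3 : ((e'.2:ℝ) + 1) * δ ≤ (e.2:ℝ) * δ := by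
            refine mul_le_mul_of_nonneg_right ?_ (le_of_lt hδ0)
            exact_mod_cast h
          nlinarith
        exact le_trans (min_le_right _ _) (le_trans hle (le_max_left _ _))
    · exact (P.piece_disjoint e.1 e'.1 hsame).mono (hcell_sub e he) (hcell_sub e' he')
  have himg_val : ∀ e ∈ K, ∀ y ∈ Ico (q e + P.c e.1) (q e + P.c e.1 + δ),
      f (y - P.c e.1) = y := by
    intro e he y hy
    have hpre : y - P.c e.1 ∈ Ico (q e) (q e + δ) := ⟨by linarith [hy.1], by linarith [hy.2]⟩
    rw [hcell_shift e he _ hpre]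
    ring
  have himg_I01 : ∀ e ∈ K, Ico (q e + P.c e.1) (q e + P.c e.1 + δ) ⊆ I01 := by
    intro e he y hy
    rw [← himg_val e he y hy]
    exact hf.1.maps (hcell_I01 e he ⟨by linarith [hy.1], by linarith [hy.2]⟩)
  have himg_disj : ∀ e ∈ K, ∀ e' ∈ K, e ≠ e' →
      Disjoint (Ico (q e + P.c e.1) (q e + P.c e.1 + δ))
        (Ico (q e' + P.c e'.1) (q e' + P.c e'.1 + δ)) := by
    intro e he e' he' hne
    rw [Set.disjoint_left]
    intro y hy1 hy2
    have e1 := himg_val e he y hy1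
    have e2 := himg_val e' he' y hy2
    have heq : y - P.c e.1 = y - P.c e'.1 := f.injective (e1.trans e2.symm)
    have hd := hcell_disj e he e' he' hne
    rw [Set.disjoint_left] at hd
    refine hd (show y - P.c e.1 ∈ Ico (q e) (q e + δ) from
      ⟨by linarith [hy1.1], by linarith [hy1.2]⟩) ?_
    rw [heq]
    exact ⟨by linarith [hy2.1], by linarith [hy2.2]⟩
  have hsame_disj : ∀ e ∈ K, Disjoint (Ico (q e) (q e + δ))
      (Ico (q e + P.c e.1) (q e + P.c e.1 + δ)) := by
    intro e he
    have hc := hδcmin e.1 (hcell_F e he)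
    rw [Set.disjoint_left]
    intro y hy1 hy2
    rcases le_or_gt (P.c e.1) 0 with h | h
    · rw [abs_of_nonpos h] at hc
      linarith [hy1.1, hy2.2]
    · rw [abs_of_pos h] at hc
      linarith [hy1.2, hy2.1]
  have hsep_cell : ∀ e ∈ K, ∀ e' ∈ K, e ≠ e' → δ ≤ |q e - q e'| := by
    intro e he e' he' hne
    by_contra hlt
    push_neg at hlt
    rcases abs_lt.mp hlt with ⟨hl1, hl2⟩
    have hmem1 : max (q e) (q e') ∈ Ico (q e) (q e + δ) :=
      ⟨le_max_left _ _, by rcases max_cases (q e) (q e') with ⟨h, _⟩ | ⟨h, _⟩ <;> rw [h] <;> linarith⟩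
    have hmem2 : max (q e) (q e') ∈ Ico (q e') (q e' + δ) :=
      ⟨le_max_right _ _, by rcases max_cases (q e) (q e') with ⟨h, _⟩ | ⟨h, _⟩ <;> rw [h] <;> linarith⟩
    exact Set.disjoint_left.mp (hcell_disj e he e' he' hne) hmem1 hmem2
  have hsep_img : ∀ e ∈ K, ∀ e' ∈ K, e ≠ e' →
      δ ≤ |(q e + P.c e.1) - (q e' + P.c e'.1)| := by
    intro e he e' he' hne
    by_contra hlt
    push_neg at hlt
    rcases abs_lt.mp hlt with ⟨hl1, hl2⟩
    have hmem1 : max (q e + P.c e.1) (q e' + P.c e'.1)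
        ∈ Ico (q e + P.c e.1) (q e + P.c e.1 + δ) :=
      ⟨le_max_left _ _, by rcases max_cases (q e + P.c e.1) (q e' + P.c e'.1)
        with ⟨h, _⟩ | ⟨h, _⟩ <;> rw [h] <;> linarith⟩
    have hmem2 : max (q e + P.c e.1) (q e' + P.c e'.1)
        ∈ Ico (q e' + P.c e'.1) (q e' + P.c e'.1 + δ) :=
      ⟨le_max_right _ _, by rcases max_cases (q e + P.c e.1) (q e' + P.c e'.1)
        with ⟨h, _⟩ | ⟨h, _⟩ <;> rw [h] <;> linarith⟩
    exact Set.disjoint_left.mp (himg_disj e he e' he' hne) hmem1 hmem2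
  have hdeg1 : ∀ e ∈ K, ∀ W ⊆ K, (∀ u ∈ W, ¬ Disjoint
      (Ico (q e + P.c e.1) (q e + P.c e.1 + δ)) (Ico (q u) (q u + δ))) → W.card ≤ 2 := by
    intro e he W hWK hWR
    refine card_le_two_window W q δ (q e + P.c e.1) ?_ ?_
    · intro a ha b hb hab
      exact hsep_cell a (hWK ha) b (hWK hb) hab
    · intro a ha
      obtain ⟨y, hy1, hy2⟩ := Set.not_disjoint_iff.mp (hWR a ha)
      constructor
      · linarith [hy1.1, hy1.2, hy2.1, hy2.2]
      · linarith [hy1.1, hy1.2, hy2.1, hy2.2]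
  have hdeg2 : ∀ e ∈ K, ∀ W ⊆ K, (∀ u ∈ W, ¬ Disjoint
      (Ico (q u + P.c u.1) (q u + P.c u.1 + δ)) (Ico (q e) (q e + δ))) → W.card ≤ 2 := by
    intro e he W hWK hWR
    refine card_le_two_window W (fun e' => q e' + P.c e'.1) δ (q e) ?_ ?_
    · intro a ha b hb hab
      exact hsep_img a (hWK ha) b (hWK hb) hab
    · intro a ha
      obtain ⟨y, hy1, hy2⟩ := Set.not_disjoint_iff.mp (hWR a ha)
      try dsimp only
      constructor
      · linarith [hy1.1, hy1.2, hy2.1, hy2.2]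
      · linarith [hy1.1, hy1.2, hy2.1, hy2.2]
  obtain ⟨S, hSK, hSind, hScard⟩ := exists_indep K (fun e e' => ¬ Disjoint
    (Ico (q e + P.c e.1) (q e + P.c e.1 + δ)) (Ico (q e') (q e' + δ))) hdeg1 hdeg2
  have hT_elim : ∀ p ∈ S.image (fun e => (q e, P.c e.1)), ∃ e ∈ S, (q e, P.c e.1) = p := by
    intro p hp
    obtain ⟨e, he, heq⟩ := Finset.mem_image.mp hp
    exact ⟨e, he, heq⟩
  have hbcell : ∀ p ∈ S.image (fun e => (q e, P.c e.1)), Ico p.1 (p.1 + δ) ⊆ I01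
      ∧ Ico (p.1+p.2) (p.1+p.2+δ) ⊆ I01 ∧ p.1 ∈ Δ ∧ p.2 ∈ Δ := by
    intro p hp
    obtain ⟨e, he, rfl⟩ := hT_elim p hp
    refine ⟨hcell_I01 e (hSK he), himg_I01 e (hSK he), ?_, P.hcΔ e.1⟩
    simp only [hqdef]
    refine Δ.add_mem (P.haΔ _) ?_
    have h : (e.2 : ℝ) * δ = e.2 • δ := by rw [nsmul_eq_mul]
    rw [h]
    exact AddSubgroup.nsmul_mem Δ hδΔ e.2
  have hbd1 : ∀ p ∈ S.image (fun e => (q e, P.c e.1)), ∀ p' ∈ S.image (fun e => (q e, P.c e.1)),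
      p ≠ p' → Disjoint (Ico p.1 (p.1+δ)) (Ico p'.1 (p'.1+δ)) := by
    intro p hp p' hp' hne
    obtain ⟨e, he, rfl⟩ := hT_elim p hp
    obtain ⟨e', he', rfl⟩ := hT_elim p' hp'
    have hee : e ≠ e' := by rintro rfl; exact hne rfl
    exact hcell_disj e (hSK he) e' (hSK he') hee
  have hbd2 : ∀ p ∈ S.image (fun e => (q e, P.c e.1)), ∀ p' ∈ S.image (fun e => (q e, P.c e.1)),
      p ≠ p' → Disjoint (Ico (p.1+p.2) (p.1+p.2+δ)) (Ico (p'.1+p'.2) (p'.1+p'.2+δ)) := by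
    intro p hp p' hp' hne
    obtain ⟨e, he, rfl⟩ := hT_elim p hp
    obtain ⟨e', he', rfl⟩ := hT_elim p' hp'
    have hee : e ≠ e' := by rintro rfl; exact hne rfl
    exact himg_disj e (hSK he) e' (hSK he') hee
  have hbd3 : ∀ p ∈ S.image (fun e => (q e, P.c e.1)), ∀ p' ∈ S.image (fun e => (q e, P.c e.1)),
      Disjoint (Ico p.1 (p.1+δ)) (Ico (p'.1+p'.2) (p'.1+p'.2+δ)) := by
    intro p hp p' hp'
    obtain ⟨e, he, rfl⟩ := hT_elim p hp
    obtain ⟨e', he', rfl⟩ := hT_elim p' hp'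
    by_cases hee : e = e'
    · subst hee
      exact hsame_disj e (hSK he)
    · have hni := hSind e' he' e he (fun h => hee h.symm)
      exact (not_not.mp hni).symm
  obtain ⟨ι, hιN, hι2, hE1, hE2, hE0⟩ := involution_builder Δ δ hδ0 hδΔ
    (S.image (fun e => (q e, P.c e.1))) hbcell hbd1 hbd2 hbd3
  refine ⟨ι, hιN, hι2, P.U \ ⋃ e ∈ S, Ico (q e) (q e + δ), ?_, ?_, ?_⟩
  · intro x hx
    simp only [Set.mem_diff, not_and, not_not] at hx
    by_cases hU : x ∈ P.U
    · have hcells := hx hU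
      simp only [Set.mem_iUnion, exists_prop] at hcells
      obtain ⟨e, heS, hxe⟩ := hcells
      have hfx : f x = x + P.c e.1 := hcell_shift e (hSK heS) x hxe
      have himgmem : x + P.c e.1 ∈ Ico (q e + P.c e.1) (q e + P.c e.1 + δ) :=
        ⟨by linarith [hxe.1], by linarith [hxe.2]⟩
      have hpT : (q e, P.c e.1) ∈ S.image (fun e => (q e, P.c e.1)) :=
        Finset.mem_image_of_mem _ heS
      simp only [Equiv.Perm.mul_apply]
      rw [hfx, hE2 (q e, P.c e.1) hpT _ himgmem]
      ring
    · have hfx : f x = x := P.fix_outside hf.1 hU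
      simp only [Equiv.Perm.mul_apply]
      rw [hfx]
      refine hE0 x (fun p hp => ?_)
      obtain ⟨e, he, rfl⟩ := hT_elim p hp
      constructor
      · intro hmem
        exact hU (hcell_U e (hSK he) hmem)
      · intro hmem
        have hval := himg_val e (hSK he) x hmem
        have heq2 : x - P.c e.1 = x := f.injective (by rw [hval, hfx])
        have hc0 : P.c e.1 = 0 := by linarith [heq2]
        exact (P.mem_F.mp (hcell_F e (hSK he))) hc0
  · exact P.measU.diff (MeasurableSet.biUnion (Set.to_countable _)
      (fun _ _ => measurableSet_Ico))
  · have hCS_sub : (⋃ e ∈ S, Ico (q e) (q e + δ)) ⊆ P.U := by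
      intro y hy
      simp only [Set.mem_iUnion, exists_prop] at hy
      obtain ⟨e, he, hye⟩ := hy
      exact hcell_U e (hSK he) hye
    have hCS_meas : MeasurableSet (⋃ e ∈ S, Ico (q e) (q e + δ)) :=
      MeasurableSet.biUnion (Set.to_countable _) (fun _ _ => measurableSet_Ico)
    have hvolCS : volume (⋃ e ∈ S, Ico (q e) (q e + δ)) = ENNReal.ofReal (S.card * δ) := by
      rw [vol_biUnion_Ico S q (fun e => q e + δ) (fun e _ => by linarith)
        (fun e he e' he' hne => hcell_disj e (hSK he) e' (hSK he') hne)]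
      congr 1
      have hconst : ∀ e ∈ S, q e + δ - q e = δ := fun e _ => by ring
      rw [Finset.sum_congr rfl hconst, Finset.sum_const, nsmul_eq_mul]
    have hdiff := measure_diff hCS_sub hCS_meas.nullMeasurableSet (by
      rw [hvolCS]; exact ENNReal.ofReal_ne_top)
    rw [hdiff, P.volU, hvolCS, ← ENNReal.ofReal_sub _ (by positivity : (0:ℝ) ≤ S.card * δ)]
    refine ENNReal.ofReal_le_ofReal ?_
    have hKcard : (K.card : ℝ) = ∑ i ∈ P.F, (⌊(P.a i.succ - P.a i.castSucc) / δ⌋₊ : ℝ) := by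
      rw [hK, Finset.card_sigma]
      push_cast
      exact Finset.sum_congr rfl (fun i _ => by rw [Finset.card_range])
    have hterm : ∀ i ∈ P.F, (P.a i.succ - P.a i.castSucc) - δ
        ≤ (⌊(P.a i.succ - P.a i.castSucc) / δ⌋₊ : ℝ) * δ := by
      intro i _
      have h1 : (P.a i.succ - P.a i.castSucc)/δ
          < (⌊(P.a i.succ - P.a i.castSucc) / δ⌋₊ : ℝ) + 1 :=
        Nat.lt_floor_add_one _
      have h2 := (div_lt_iff₀ hδ0).mp h1
      nlinarith
    have hsum1 : P.len - (P.F.card : ℝ) * δ ≤ (K.card : ℝ) * δ := by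
      have h1 : P.len - (P.F.card:ℝ)*δ = ∑ i ∈ P.F, ((P.a i.succ - P.a i.castSucc) - δ) := by
        rw [Finset.sum_sub_distrib, Finset.sum_const, nsmul_eq_mul]
        rfl
      rw [h1]
      calc ∑ i ∈ P.F, ((P.a i.succ - P.a i.castSucc) - δ)
          ≤ ∑ i ∈ P.F, (⌊(P.a i.succ - P.a i.castSucc) / δ⌋₊ : ℝ) * δ :=
            Finset.sum_le_sum hterm
      _ = (K.card : ℝ) * δ := by rw [hKcard, Finset.sum_mul]
    have hF_card : (P.F.card : ℝ) ≤ (P.m + 1 : ℝ) := by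
      have h1 := Finset.card_filter_le (Finset.univ : Finset (Fin (P.m+1))) (fun i => P.c i ≠ 0)
      have h2 : (Finset.univ : Finset (Fin (P.m+1))).card = P.m + 1 := by simp
      rw [h2] at h1
      exact_mod_cast h1
    have h5S : (K.card : ℝ) ≤ 5 * S.card := by exact_mod_cast hScard
    have hδnn : (0:ℝ) ≤ δ := le_of_lt hδ0
    have hKδ : (K.card : ℝ) * δ ≤ 5 * S.card * δ := mul_le_mul_of_nonneg_right h5S hδnn
    have hFδ : (P.F.card : ℝ) * δ ≤ (P.m+1 : ℝ) * δ := mul_le_mul_of_nonneg_right hF_card hδnn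
    linarith

theorem iterate (Δ : AddSubgroup ℝ) (h1 : (1:ℝ) ∈ Δ) (hden : Dense (Δ : Set ℝ))
    {f : Equiv.Perm ℝ} (hf : Nice Δ f) (s : ℕ) {ε : ℝ} (hε : 0 < ε) :
    ∃ (l : List (Equiv.Perm ℝ)) (u : Equiv.Perm ℝ), l.length = s ∧
      (∀ g ∈ l, Nice Δ g ∧ g * g = 1) ∧ f = l.prod * u ∧ Nice Δ u ∧
      ∀ Q : NicePart Δ u, Q.len ≤ (4/5)^s + s * ε := by
  induction s with
  | zero =>
      refine ⟨[], f, rfl, by simp, by simp, hf, ?_⟩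
      intro Q
      simp only [pow_zero, Nat.cast_zero, zero_mul, add_zero]
      exact Q.len_le_one
  | succ k ih =>
      obtain ⟨l, u, hlen, hinv, hprod, hu, hbound⟩ := ih
      obtain ⟨P⟩ := hu.part h1
      obtain ⟨ι, hιN, hι2, W, hW, hWm, hWv⟩ := shrink_step Δ hden hu P hε
      refine ⟨l ++ [ι], ι * u, by simp [hlen], ?_, ?_, hιN.mul hu, ?_⟩
      · intro g hg
        rcases List.mem_append.mp hg with h | h
        · exact hinv g h
        · rw [List.mem_singleton.mp h]
          exact ⟨hιN, hι2⟩
      · have hkey : (l ++ [ι]).prod * (ι * u) = l.prod * u := by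
          rw [List.prod_append, List.prod_singleton, mul_assoc, ← mul_assoc ι ι u, hι2, one_mul]
        rw [hkey]
        exact hprod
      · intro Q
        have hQ := Q.len_le_of_fix W hW
        have h2 := le_trans hQ hWv
        have h3 : Q.len ≤ 4/5 * P.len + ε := by
          refine (ENNReal.ofReal_le_ofReal_iff ?_).mp h2
          linarith [P.len_nonneg, le_of_lt hε]
        have h4 := hbound P
        have h5 : (0:ℝ) ≤ (k:ℝ) * ε := mul_nonneg (Nat.cast_nonneg k) (le_of_lt hε)
        calc Q.len ≤ 4/5 * P.len + ε := h3
        _ ≤ 4/5 * ((4/5)^k + k * ε) + ε := by linarith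
        _ ≤ (4/5)^(k+1) + (k+1 : ℕ) * ε := by
            rw [pow_succ]
            push_cast
            nlinarith [le_of_lt hε]

theorem rot_exists (Δ : AddSubgroup ℝ) {p q z : ℝ} (hpq : p < q) (hqz : q ≤ z) (hz1 : z ≤ 1)
    (h0p : 0 ≤ p) (hpΔ : p ∈ Δ) (hqΔ : q ∈ Δ) (hzΔ : z ∈ Δ) :
    ∃ ρ : Equiv.Perm ℝ, Nice Δ ρ ∧ (∀ x, x ∉ Ico p z → ρ x = x) ∧
      (∀ x ∈ Ico p q, ρ x = x + (z - q)) := by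
  classical
  set φ : ℝ → ℝ := fun x => if p ≤ x ∧ x < q then x + (z - q)
    else if q ≤ x ∧ x < z then x - (q - p) else x with hφ
  set ψ : ℝ → ℝ := fun y => if z-(q-p) ≤ y ∧ y < z then y - (z - q)
    else if p ≤ y ∧ y < z-(q-p) then y + (q - p) else y with hψ
  have hφ1 : ∀ x, p ≤ x → x < q → φ x = x + (z - q) := by
    intro x h1 h2; simp only [hφ]; rw [if_pos ⟨h1, h2⟩]
  have hφ2 : ∀ x, q ≤ x → x < z → φ x = x - (q - p) := by
    intro x h1 h2; simp only [hφ]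
    rw [if_neg (fun h => absurd h.2 (not_lt.mpr h1)), if_pos ⟨h1, h2⟩]
  have hφ3 : ∀ x, ¬(p ≤ x ∧ x < z) → φ x = x := by
    intro x h; simp only [hφ]
    rw [if_neg (fun h2 => h ⟨h2.1, lt_of_lt_of_le h2.2 hqz⟩),
      if_neg (fun h2 => h ⟨le_trans (le_of_lt hpq) h2.1, h2.2⟩)]
  have hψ1 : ∀ y, z-(q-p) ≤ y → y < z → ψ y = y - (z - q) := by
    intro y h1 h2; simp only [hψ]; rw [if_pos ⟨h1, h2⟩]
  have hψ2 : ∀ y, p ≤ y → y < z-(q-p) → ψ y = y + (q - p) := by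
    intro y h1 h2; simp only [hψ]
    rw [if_neg (fun h => absurd h.1 (not_le.mpr h2)), if_pos ⟨h1, h2⟩]
  have hψ3 : ∀ y, ¬(p ≤ y ∧ y < z) → ψ y = y := by
    intro y h; simp only [hψ]
    rw [if_neg (fun h2 => h ⟨le_trans (by linarith) h2.1, h2.2⟩),
      if_neg (fun h2 => h ⟨h2.1, by linarith [h2.2]⟩)]
  have hli : ∀ x, ψ (φ x) = x := by
    intro x
    rcases le_or_gt p x with h1 | h1
    · rcases lt_or_ge x q with h2 | h2
      · rw [hφ1 x h1 h2, hψ1 _ (by linarith) (by linarith)]; ring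
      · rcases lt_or_ge x z with h3 | h3
        · rw [hφ2 x h2 h3, hψ2 _ (by linarith) (by linarith)]; ring
        · rw [hφ3 x (fun h => absurd h.2 (not_lt.mpr h3)),
            hψ3 x (fun h => absurd h.2 (not_lt.mpr h3))]
    · rw [hφ3 x (fun h => absurd h.1 (not_le.mpr h1)),
        hψ3 x (fun h => absurd h.1 (not_le.mpr h1))]
  have hri : ∀ y, φ (ψ y) = y := by
    intro y
    rcases le_or_gt (z - (q-p)) y with h1 | h1
    · rcases lt_or_ge y z with h2 | h2
      · rw [hψ1 y h1 h2, hφ1 _ (by linarith) (by linarith)]; ring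
      · rw [hψ3 y (fun h => absurd h.2 (not_lt.mpr h2)),
          hφ3 y (fun h => absurd h.2 (not_lt.mpr h2))]
    · rcases le_or_gt p y with h2 | h2
      · rw [hψ2 y h2 h1, hφ2 _ (by linarith) (by linarith)]; ring
      · rw [hψ3 y (fun h => absurd h.1 (not_le.mpr h2)),
          hφ3 y (fun h => absurd h.1 (not_le.mpr h2))]
  set ρ : Equiv.Perm ℝ := ⟨φ, ψ, hli, hri⟩ with hρ
  have hρa : ∀ x, ρ x = φ x := fun x => rfl
  have hIsub : Ico p z ⊆ I01 := fun w hw => ⟨le_trans h0p hw.1, lt_of_lt_of_le hw.2 hz1⟩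
  have hfix : ∀ x, x ∉ Ico p z → ρ x = x := by
    intro x hx
    rw [hρa]
    exact hφ3 x (fun h => hx ⟨h.1, h.2⟩)
  refine ⟨ρ, ⟨?_, ?_, ?_⟩, hfix, fun x hx => by rw [hρa]; exact hφ1 x hx.1 hx.2⟩
  · intro x hx
    exact hfix x (fun h => hx (hIsub h))
  · intro x _
    rw [hρa]
    rcases le_or_gt p x with h1 | h1
    · rcases lt_or_ge x q with h2 | h2
      · rw [hφ1 x h1 h2]
        have : x + (z - q) - x = z - q := by ring
        rw [this]
        exact Δ.sub_mem hzΔ hqΔ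
      · rcases lt_or_ge x z with h3 | h3
        · rw [hφ2 x h2 h3]
          have : x - (q - p) - x = -(q - p) := by ring
          rw [this]
          exact Δ.neg_mem (Δ.sub_mem hqΔ hpΔ)
        · rw [hφ3 x (fun h => absurd h.2 (not_lt.mpr h3))]
          simpa using Δ.zero_mem
    · rw [hφ3 x (fun h => absurd h.1 (not_le.mpr h1))]
      simpa using Δ.zero_mem
  · refine ⟨insert 0 (({p, q, z} : Finset ℝ).filter (fun b => b ∈ I01)), ?_,
      Finset.mem_insert_self _ _, ?_⟩
    · intro b hb
      simp only [Finset.coe_insert, Set.mem_insert_iff, Finset.mem_coe, Finset.mem_filter,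
        Finset.mem_insert, Finset.mem_singleton] at hb
      rcases hb with rfl | ⟨hbm, hbI⟩
      · exact ⟨⟨le_refl 0, zero_lt_one⟩, Δ.zero_mem⟩
      · refine ⟨hbI, ?_⟩
        rcases hbm with rfl | rfl | rfl
        · exact hpΔ
        · exact hqΔ
        · exact hzΔ
    · intro x y hxI hyI hxy hgap'
      have hmm : ∀ b : ℝ, b = p ∨ b = q ∨ b = z → b ∈ I01 →
          b ∈ insert 0 (({p, q, z} : Finset ℝ).filter (fun b => b ∈ I01)) := by
        intro b hb hbI
        refine Finset.mem_insert_of_mem (Finset.mem_filter.mpr ⟨?_, hbI⟩)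
        simp only [Finset.mem_insert, Finset.mem_singleton]
        exact hb
      have memiff : ∀ l r : ℝ, 0 ≤ l → r ≤ 1 → (l = p ∨ l = q ∨ l = z) →
          (r = p ∨ r = q ∨ r = z) → ((l ≤ x ∧ x < r) ↔ (l ≤ y ∧ y < r)) := by
        intro l r hl0 hr1 hlm hrm
        constructor
        · intro hxm
          constructor
          · exact le_trans hxm.1 hxy
          · by_contra hge
            push_neg at hge
            have hrI : r ∈ I01 := ⟨by linarith [hxm.2, hxI.1], lt_of_le_of_lt hge hyI.2⟩
            rcases hgap' r (hmm r hrm hrI) with h | h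
            · linarith [hxm.2]
            · linarith
        · intro hym
          constructor
          · by_contra hlt
            push_neg at hlt
            have hlI : l ∈ I01 := ⟨hl0, lt_of_le_of_lt hym.1 hyI.2⟩
            rcases hgap' l (hmm l hlm hlI) with h | h
            · linarith
            · linarith [hym.1]
          · exact lt_of_le_of_lt hxy hym.2
      have i1 : (p ≤ x ∧ x < q) ↔ (p ≤ y ∧ y < q) :=
        memiff p q h0p (by linarith) (Or.inl rfl) (Or.inr (Or.inl rfl))
      have i2 : (q ≤ x ∧ x < z) ↔ (q ≤ y ∧ y < z) :=
        memiff q z (by linarith) hz1 (Or.inr (Or.inl rfl)) (Or.inr (Or.inr rfl))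
      rw [hρa, hρa]
      simp only [hφ]
      rw [if_congr i1 rfl rfl, if_congr i2 rfl rfl]
      by_cases h1 : p ≤ y ∧ y < q
      · rw [if_pos h1, if_pos h1]; ring
      · rw [if_neg h1, if_neg h1]
        by_cases h2 : q ≤ y ∧ y < z
        · rw [if_pos h2, if_pos h2]; ring
        · rw [if_neg h2, if_neg h2]; ring

theorem pack (Δ : AddSubgroup ℝ) :
    ∀ (L : List (ℝ × ℝ)) (z : ℝ), z ∈ Δ → 0 ≤ z → z ≤ 1 →
    (∀ pq ∈ L, pq.1 < pq.2 ∧ pq.1 ∈ Δ ∧ pq.2 ∈ Δ ∧ 0 ≤ pq.1 ∧ pq.2 ≤ z) →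
    List.Pairwise (fun A B : ℝ × ℝ => B.2 ≤ A.1) L →
    ∃ H : Equiv.Perm ℝ, Nice Δ H ∧ (∀ x, x ∉ Ico (0:ℝ) z → H x = x) ∧
      ∀ pq ∈ L, ∀ x ∈ Ico pq.1 pq.2, H x ∈ Ico (z - (L.map fun pq => pq.2 - pq.1).sum) z := by
  intro L
  induction L with
  | nil =>
      intro z _ _ _ _ _
      exact ⟨1, Nice.one, fun x _ => rfl, by simp⟩
  | cons hd tl ih =>
      intro z hzΔ hz0 hz1 hmem hpw
      obtain ⟨hlt, h1Δ, h2Δ, h0, hle⟩ := hmem hd List.mem_cons_self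
      obtain ⟨ρ, hρN, hρfix, hρmap⟩ := rot_exists Δ hlt hle hz1 h0 h1Δ h2Δ hzΔ
      have hz'Δ : z - (hd.2 - hd.1) ∈ Δ := Δ.sub_mem hzΔ (Δ.sub_mem h2Δ h1Δ)
      have hz'0 : 0 ≤ z - (hd.2 - hd.1) := by linarith
      have hz'1 : z - (hd.2 - hd.1) ≤ 1 := by linarith
      have hmem' : ∀ pq ∈ tl, pq.1 < pq.2 ∧ pq.1 ∈ Δ ∧ pq.2 ∈ Δ ∧ 0 ≤ pq.1
          ∧ pq.2 ≤ z - (hd.2 - hd.1) := by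
        intro pq hpq
        obtain ⟨a1, a2, a3, a4, a5⟩ := hmem pq (List.mem_cons_of_mem _ hpq)
        have h6 : pq.2 ≤ hd.1 := (List.pairwise_cons.mp hpw).1 pq hpq
        exact ⟨a1, a2, a3, a4, by linarith⟩
      obtain ⟨H', hH'N, hH'fix, hH'map⟩ := ih (z - (hd.2 - hd.1)) hz'Δ hz'0 hz'1 hmem'
        (List.pairwise_cons.mp hpw).2
      refine ⟨H' * ρ, hH'N.mul hρN, ?_, ?_⟩
      · intro x hx
        have h1 : ρ x = x := hρfix x (fun h => hx ⟨le_trans h0 h.1, h.2⟩)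
        simp only [Equiv.Perm.mul_apply, h1]
        exact hH'fix x (fun h => hx ⟨h.1, by linarith [h.2]⟩)
      · intro pq hpq x hx
        have hsum : ((hd :: tl).map fun pq => pq.2 - pq.1).sum
            = (hd.2 - hd.1) + (tl.map fun pq => pq.2 - pq.1).sum := by
          simp
        rcases List.mem_cons.mp hpq with heq | htl
        · subst heq
          have h1 : ρ x = x + (z - pq.2) := hρmap x hx
          have hlow : z - (pq.2 - pq.1) ≤ ρ x := by rw [h1]; linarith [hx.1]
          have hhigh : ρ x < z := by rw [h1]; linarith [hx.2]
          have h2 : H' (ρ x) = ρ x := hH'fix _ (fun h => absurd h.2 (not_lt.mpr hlow))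
          simp only [Equiv.Perm.mul_apply, h2]
          rw [hsum]
          constructor
          · have hts : 0 ≤ (tl.map fun pq => pq.2 - pq.1).sum := by
              refine List.sum_nonneg (fun r hr => ?_)
              obtain ⟨pq', hpq', rfl⟩ := List.mem_map.mp hr
              have := (hmem' pq' hpq').1
              linarith
            linarith
          · exact hhigh
        · have h6 : pq.2 ≤ hd.1 := (List.pairwise_cons.mp hpw).1 pq htl
          have h1 : ρ x = x := hρfix x (fun h => by
            have := hx.2
            have := h.1
            linarith)
          simp only [Equiv.Perm.mul_apply, h1]
          have := hH'map pq htl x hx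
          rw [hsum]
          constructor
          · have := this.1
            linarith
          · linarith [this.2]

theorem NicePart.packList {Δ : AddSubgroup ℝ} {u : Equiv.Perm ℝ} (P : NicePart Δ u) :
    ∃ L : List (ℝ × ℝ),
      (∀ pq ∈ L, pq.1 < pq.2 ∧ pq.1 ∈ Δ ∧ pq.2 ∈ Δ ∧ 0 ≤ pq.1 ∧ pq.2 ≤ 1) ∧
      List.Pairwise (fun A B : ℝ × ℝ => B.2 ≤ A.1) L ∧
      (L.map fun pq => pq.2 - pq.1).sum = P.len ∧
      ∀ x ∈ P.U, ∃ pq ∈ L, x ∈ Ico pq.1 pq.2 := by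
  classical
  have hmem0 : ∀ pq : ℝ × ℝ, pq ∈ (List.finRange (P.m+1)).filterMap (fun i =>
      if P.c i ≠ 0 then some (P.a i.castSucc, P.a i.succ) else none) →
      ∃ i : Fin (P.m+1), P.c i ≠ 0 ∧ pq = (P.a i.castSucc, P.a i.succ) := by
    intro pq hpq
    obtain ⟨i, _, hi⟩ := List.mem_filterMap.mp hpq
    by_cases h : P.c i ≠ 0
    · rw [if_pos h] at hi
      exact ⟨i, h, (Option.some_inj.mp hi).symm⟩
    · rw [if_neg h] at hi
      exact absurd hi (Option.some_ne_none _).symm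
  refine ⟨((List.finRange (P.m+1)).filterMap fun i =>
    if P.c i ≠ 0 then some (P.a i.castSucc, P.a i.succ) else none).reverse, ?_, ?_, ?_, ?_⟩
  · intro pq hpq
    rw [List.mem_reverse] at hpq
    obtain ⟨i, _, rfl⟩ := hmem0 pq hpq
    refine ⟨by have := P.lam_pos i; simp only; linarith, P.haΔ _, P.haΔ _, (P.a_mem_I01 i).1, ?_⟩
    have h2 : P.a i.succ ≤ P.a (Fin.last (P.m+1)) := P.hmono.monotone (Fin.le_last _)
    rw [P.halast] at h2
    exact h2
  · rw [List.pairwise_reverse]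
    refine List.Pairwise.filterMap _ ?_ (List.pairwise_lt_finRange (P.m+1))
    intro i j hij A hA B hB
    have hA' : A = (P.a i.castSucc, P.a i.succ) := by
      by_cases h : P.c i ≠ 0
      · rw [if_pos h] at hA; exact (Option.mem_some_iff.mp hA).symm
      · rw [if_neg h] at hA; exact absurd hA (by simp)
    have hB' : B = (P.a j.castSucc, P.a j.succ) := by
      by_cases h : P.c j ≠ 0
      · rw [if_pos h] at hB; exact (Option.mem_some_iff.mp hB).symm
      · rw [if_neg h] at hB; exact absurd hB (by simp)
    rw [hA', hB']
    exact P.succ_le i j hij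
  · rw [List.map_reverse, List.sum_reverse]
    have hgen : ∀ l : List (Fin (P.m+1)),
        ((l.filterMap fun i => if P.c i ≠ 0 then some (P.a i.castSucc, P.a i.succ) else none).map
          (fun pq : ℝ × ℝ => pq.2 - pq.1)).sum
        = (l.map (fun i => if P.c i ≠ 0 then P.a i.succ - P.a i.castSucc else 0)).sum := by
      intro l
      induction l with
      | nil => simp
      | cons hd tl ihl =>
          by_cases h : P.c hd ≠ 0
          · simp only [List.filterMap_cons, if_pos h, List.map_cons, List.sum_cons, ihl]
          · simp only [List.filterMap_cons, if_neg h, List.map_cons, List.sum_cons, ihl]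
            simp
    rw [hgen]
    have h2 : (List.map (fun i => if P.c i ≠ 0 then P.a i.succ - P.a i.castSucc else 0)
        (List.finRange (P.m+1))).sum
        = ∑ i : Fin (P.m+1), (if P.c i ≠ 0 then P.a i.succ - P.a i.castSucc else 0) :=
      (Fin.sum_univ_def _).symm
    rw [h2]
    show (∑ i : Fin (P.m+1), if P.c i ≠ 0 then P.a i.succ - P.a i.castSucc else 0) = P.len
    rw [← Finset.sum_filter]
    rfl
  · intro x hx
    obtain ⟨i, hi, hxi⟩ := P.mem_U.mp hx
    refine ⟨(P.a i.castSucc, P.a i.succ), ?_, hxi⟩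
    rw [List.mem_reverse]
    refine List.mem_filterMap.mpr ⟨i, List.mem_finRange i, ?_⟩
    rw [if_pos hi]

lemma pow_bound {n : ℕ} (hn : 0 < n) :
    ((4:ℝ)/5) ^ ((⌊Real.log n / Real.log 1.25⌋).toNat + 1) < 1 / n := by
  have hn0 : (0:ℝ) < n := by exact_mod_cast hn
  have hlog : 0 < Real.log 1.25 := Real.log_pos (by norm_num)
  have h54 : (1.25:ℝ) = 5/4 := by norm_num
  have hx : Real.log n / Real.log 1.25
      < ((((⌊Real.log n / Real.log 1.25⌋).toNat + 1 : ℕ)):ℝ) := by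
    have h1 : ((⌊Real.log n / Real.log 1.25⌋:ℤ) : ℝ)
        ≤ (((⌊Real.log n / Real.log 1.25⌋).toNat : ℤ) : ℝ) := by
      exact_mod_cast Int.self_le_toNat _
    have h2 := Int.lt_floor_add_one (Real.log n / Real.log 1.25)
    push_cast
    push_cast at h1
    linarith
  have h2 : (n:ℝ) < (5/4) ^ ((⌊Real.log n / Real.log 1.25⌋).toNat + 1) := by
    have h3 : Real.log n < (((⌊Real.log n / Real.log 1.25⌋).toNat + 1 : ℕ):ℝ) * Real.log (5/4) := by
      rw [← h54]
      calc Real.log n = (Real.log n / Real.log 1.25) * Real.log 1.25 := by field_simp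
      _ < _ := mul_lt_mul_of_pos_right hx hlog
    have h4 : Real.log n < Real.log ((5/4) ^ ((⌊Real.log n / Real.log 1.25⌋).toNat + 1)) := by
      rw [Real.log_pow]
      exact h3
    have h5 : (n:ℝ) = Real.exp (Real.log n) := (Real.exp_log hn0).symm
    have h6 : ((5:ℝ)/4) ^ ((⌊Real.log n / Real.log 1.25⌋).toNat + 1)
        = Real.exp (Real.log ((5/4) ^ ((⌊Real.log n / Real.log 1.25⌋).toNat + 1))) :=
      (Real.exp_log (by positivity)).symm
    calc (n:ℝ) = Real.exp (Real.log n) := h5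
    _ < Real.exp (Real.log ((5/4) ^ ((⌊Real.log n / Real.log 1.25⌋).toNat + 1))) :=
        Real.exp_lt_exp.mpr h4
    _ = _ := Real.exp_log (by positivity)
  have h7 : ((4:ℝ)/5) ^ ((⌊Real.log n / Real.log 1.25⌋).toNat + 1)
      = (((5:ℝ)/4) ^ ((⌊Real.log n / Real.log 1.25⌋).toNat + 1))⁻¹ := by
    rw [← inv_pow]
    norm_num
  rw [h7, one_div]
  exact inv_strictAnti₀ hn0 h2

lemma one_mem_delta {p : ℕ} (α : Fin p → ℝ) : (1:ℝ) ∈ Delta α :=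
  AddSubgroup.subset_closure (Or.inr rfl)

lemma alpha_mem_delta {p : ℕ} (α : Fin p → ℝ) (i : Fin p) : α i ∈ Delta α :=
  AddSubgroup.subset_closure (Or.inl ⟨i, rfl⟩)


lemma delta_dense {p : ℕ} (α : Fin (p+1) → ℝ) (hirr : Irrational (α 0)) :
    Dense ((Delta α : AddSubgroup ℝ) : Set ℝ) := by
  rcases AddSubgroup.dense_or_cyclic (Delta α) with h | ⟨a, ha⟩
  · exact h
  · exfalso
    have h1 : (1:ℝ) ∈ Delta α := one_mem_delta α
    have h0 : α 0 ∈ Delta α := alpha_mem_delta α 0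
    rw [ha] at h1 h0
    obtain ⟨m, hm⟩ := AddSubgroup.mem_closure_singleton.mp h1
    obtain ⟨k, hk⟩ := AddSubgroup.mem_closure_singleton.mp h0
    rw [zsmul_eq_mul] at hm hk
    have hm0 : (m:ℝ) ≠ 0 := by
      intro h
      rw [h, zero_mul] at hm
      exact zero_ne_one hm
    apply hirr
    refine ⟨(k:ℚ)/(m:ℚ), ?_⟩
    have haeq : a = 1 / m := by field_simp at hm ⊢; linarith [hm]
    push_cast
    rw [← hk, haeq]
    field_simp

end

end IETProof


/-- For every `f ∈ Γ_α` and `n ≥ 1`, writing `s_n = ⌊ln n / ln 1.25⌋ + 1`, there exist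
`g_n ∈ Γ_α` supported in `[1 - 1/n, 1)`, `h ∈ Γ_α` and `s_n` involutions
`i_1, …, i_{s_n} ∈ Γ_α` with `f = i_1 ∘ ⋯ ∘ i_{s_n} ∘ (h ∘ g_n ∘ h⁻¹)`. -/
theorem decomposition_involutions_small_support (p : ℕ) (α : Fin (p + 1) → ℝ)
    (hα : ∀ i, α i ∈ Set.Ico (0 : ℝ) 1) (hirr : Irrational (α 0))
    (n : ℕ) (hn : 0 < n) (f : Equiv.Perm ℝ) (hf : MemGamma (Delta α) f) :
    ∃ (g h : Equiv.Perm ℝ)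
      (i : Fin ((⌊Real.log (n : ℝ) / Real.log 1.25⌋).toNat + 1) → Equiv.Perm ℝ),
      MemGamma (Delta α) g ∧ (∀ x : ℝ, x ∉ Set.Ico (1 - 1 / (n : ℝ)) 1 → g x = x) ∧
      MemGamma (Delta α) h ∧
      (∀ j, MemGamma (Delta α) (i j) ∧ i j * i j = 1) ∧
      f = (List.ofFn i).prod * (h * g * h⁻¹) := by
  classical
  have h1 : (1:ℝ) ∈ Delta α := IETProof.one_mem_delta α
  have hden : Dense ((Delta α : AddSubgroup ℝ) : Set ℝ) := IETProof.delta_dense α hirr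
  have hNf : IETProof.Nice (Delta α) f := IETProof.memGamma_nice h1 hf
  have hpow := IETProof.pow_bound hn
  have hεpos : 0 < (1/(n:ℝ) - (4/5) ^ ((⌊Real.log (n:ℝ) / Real.log 1.25⌋).toNat + 1))
      / (((⌊Real.log (n:ℝ) / Real.log 1.25⌋).toNat + 1 : ℕ) + 1) := by
    refine div_pos ?_ (by positivity)
    linarith [hpow]
  obtain ⟨l, u, hlen, hinv, hprod, hu, hbound⟩ := IETProof.iterate (Delta α) h1 hden hNf
    ((⌊Real.log (n:ℝ) / Real.log 1.25⌋).toNat + 1) hεpos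
  obtain ⟨Q⟩ := hu.part h1
  have hQlen : Q.len ≤ 1/(n:ℝ) := by
    have hb := hbound Q
    set S := (⌊Real.log (n:ℝ) / Real.log 1.25⌋).toNat + 1 with hS
    have hX : (0:ℝ) ≤ 1/(n:ℝ) - (4/5)^S := by linarith [hpow]
    have hsn : (0:ℝ) < (S:ℝ) + 1 := by positivity
    have hmul : (S:ℝ) * ((1/(n:ℝ) - (4/5)^S)/((S:ℝ) + 1)) ≤ 1/(n:ℝ) - (4/5)^S := by
      calc (S:ℝ) * ((1/(n:ℝ) - (4/5)^S)/((S:ℝ)+1))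
          = (1/(n:ℝ) - (4/5)^S) * ((S:ℝ)/((S:ℝ)+1)) := by ring
      _ ≤ (1/(n:ℝ) - (4/5)^S) * 1 := by
          refine mul_le_mul_of_nonneg_left ?_ hX
          rw [div_le_one hsn]
          linarith
      _ = 1/(n:ℝ) - (4/5)^S := by ring
    linarith
  obtain ⟨L, hLmem, hLpw, hLsum, hLcov⟩ := Q.packList
  obtain ⟨H, hHN, hHfix, hHmap⟩ := IETProof.pack (Delta α) L 1 h1 (by norm_num) (le_refl 1)
    hLmem hLpw
  have hofn : List.ofFn (fun j : Fin ((⌊Real.log (n:ℝ) / Real.log 1.25⌋).toNat + 1) =>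
      l.get (Fin.cast hlen.symm j)) = l := by
    apply List.ext_getElem
    · simp [hlen]
    · intro k hk1 hk2
      rw [List.getElem_ofFn]
      simp [List.get_eq_getElem]
  refine ⟨H * u * H⁻¹, H⁻¹,
    fun j => l.get (Fin.cast hlen.symm j), ?_, ?_, ?_, ?_, ?_⟩
  · exact (((hHN.mul hu).mul hHN.inv).memGamma)
  · intro x hx
    by_contra hgx
    have hy : u (H⁻¹ x) ≠ H⁻¹ x := by
      intro h
      apply hgx
      show H (u (H⁻¹ x)) = x
      rw [h, Equiv.Perm.apply_inv_self]
    have hyU : H⁻¹ x ∈ Q.U := by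
      by_contra h
      exact hy (Q.fix_outside hu.1 h)
    obtain ⟨pq, hpqL, hypq⟩ := hLcov _ hyU
    have hmap := hHmap pq hpqL _ hypq
    rw [Equiv.Perm.apply_inv_self, hLsum] at hmap
    refine hx ⟨?_, hmap.2⟩
    have h2 : 1 - 1/(n:ℝ) ≤ 1 - Q.len := by linarith [hQlen]
    linarith [hmap.1]
  · exact hHN.inv.memGamma
  · intro j
    have hmem : l.get (Fin.cast hlen.symm j) ∈ l := by apply List.get_mem
    exact ⟨(hinv _ hmem).1.memGamma, (hinv _ hmem).2⟩
  · rw [hofn]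
    have hconj : H⁻¹ * (H * u * H⁻¹) * H⁻¹⁻¹ = u := by
      group
    rw [hconj]
    exact hprod
end

section
/- Let G be a group, H a subgroup of G, and R ∈ G an involution such that every element of H commutes with every element of R·H·R⁻¹. Let p ≥ 1 and let g ∈ H be a product of at most 2p elements each of which is strongly reversible in H. Then g is a product of at most p+1 elements each of which is strongly reversible in G. -/
private lemma srev_mul_aux {G : Type*} [Group G] {x y hx hy : G}
    (hx2 : hx * hx = 1) (hy2 : hy * hy = 1)
    (hxr : hx * x * hx⁻¹ = x⁻¹) (hyr : hy * y * hy⁻¹ = y⁻¹)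
    (cxy : Commute x y) (cxhy : Commute x hy) (chxy : Commute hx y)
    (chxhy : Commute hx hy) :
    (hx * hy) * (hx * hy) = 1 ∧ (hx * hy) * (x * y) * (hx * hy)⁻¹ = (x * y)⁻¹ := by
  constructor
  · calc (hx * hy) * (hx * hy) = hx * (hy * hx) * hy := by group
      _ = hx * (hx * hy) * hy := by rw [← chxhy.eq]
      _ = (hx * hx) * (hy * hy) := by group
      _ = 1 := by rw [hx2, hy2, one_mul]
  · calc (hx * hy) * (x * y) * (hx * hy)⁻¹
        = hx * (hy * x) * y * hy⁻¹ * hx⁻¹ := by group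
      _ = hx * (x * hy) * y * hy⁻¹ * hx⁻¹ := by rw [← cxhy.eq]
      _ = (hx * x) * (hy * y * hy⁻¹) * hx⁻¹ := by group
      _ = (hx * x) * y⁻¹ * hx⁻¹ := by rw [hyr]
      _ = (hx * x * hx⁻¹) * (hx * y⁻¹ * hx⁻¹) := by group
      _ = x⁻¹ * (hx * y⁻¹ * hx⁻¹) := by rw [hxr]
      _ = x⁻¹ * (y⁻¹ * hx * hx⁻¹) := by rw [chxy.inv_right.eq]
      _ = x⁻¹ * y⁻¹ := by group
      _ = (x * y)⁻¹ := by rw [mul_inv_rev, cxy.inv_inv.eq]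

private lemma srev_zip_aux {G : Type*} [Group G] (H : Subgroup G) (R : G)
    (hcomm : ∀ h₁ ∈ H, ∀ h₂ ∈ H, Commute h₁ (R * h₂ * R⁻¹)) :
    ∀ l₁ l₂ : List G, l₁.length = l₂.length →
      (∀ x ∈ l₁, x ∈ H ∧ ∃ h ∈ H, h * h = 1 ∧ h * x * h⁻¹ = x⁻¹) →
      (∀ x ∈ l₂, x ∈ H ∧ ∃ h ∈ H, h * h = 1 ∧ h * x * h⁻¹ = x⁻¹) →
      ∃ L : List G, L.length = l₁.length ∧
        (∀ z ∈ L, ∃ h : G, h * h = 1 ∧ h * z * h⁻¹ = z⁻¹) ∧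
        L.prod = l₁.prod * (R * l₂.prod * R⁻¹) := by
  intro l₁
  induction l₁ with
  | nil =>
    intro l₂ hlen _ _
    have h2 : l₂ = [] := List.eq_nil_of_length_eq_zero hlen.symm
    subst h2
    refine ⟨[], rfl, by simp, ?_⟩
    simp
  | cons x t₁ ih =>
    intro l₂ hlen hQ1 hQ2
    cases l₂ with
    | nil => simp at hlen
    | cons y t₂ =>
      obtain ⟨hxH, hx, hhx, hx2, hxr⟩ := hQ1 x List.mem_cons_self
      obtain ⟨hyH, hy, hhy, hy2, hyr⟩ := hQ2 y List.mem_cons_self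
      obtain ⟨L', hL'len, hL'srev, hL'prod⟩ :=
        ih t₂ (by simpa using hlen)
          (fun z hz => hQ1 z (List.mem_cons_of_mem _ hz))
          (fun z hz => hQ2 z (List.mem_cons_of_mem _ hz))
      refine ⟨(x * (R * y * R⁻¹)) :: L', by simp [hL'len], ?_, ?_⟩
      · intro z hz
        rcases List.mem_cons.1 hz with rfl | hz
        · have θhy2 : (R * hy * R⁻¹) * (R * hy * R⁻¹) = 1 := by
            have e : (R * hy * R⁻¹) * (R * hy * R⁻¹) = R * (hy * hy) * R⁻¹ := by group
            rw [e, hy2]; group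
          have θhyr : (R * hy * R⁻¹) * (R * y * R⁻¹) * (R * hy * R⁻¹)⁻¹
              = (R * y * R⁻¹)⁻¹ := by
            have e : (R * hy * R⁻¹) * (R * y * R⁻¹) * (R * hy * R⁻¹)⁻¹
                = R * (hy * y * hy⁻¹) * R⁻¹ := by group
            rw [e, hyr]; group
          obtain ⟨i1, i2⟩ := srev_mul_aux hx2 θhy2 hxr θhyr
            (hcomm x hxH y hyH) (hcomm x hxH hy hhy)
            (hcomm hx hhx y hyH) (hcomm hx hhx hy hhy)
          exact ⟨hx * (R * hy * R⁻¹), i1, i2⟩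
        · exact hL'srev z hz
      · have hmem : t₁.prod ∈ H := H.list_prod_mem (fun z hz => (hQ1 z (List.mem_cons_of_mem _ hz)).1)
        have hc : t₁.prod * (R * y * R⁻¹) = (R * y * R⁻¹) * t₁.prod :=
          (hcomm t₁.prod hmem y hyH).eq
        calc ((x * (R * y * R⁻¹)) :: L').prod
            = (x * (R * y * R⁻¹)) * (t₁.prod * (R * t₂.prod * R⁻¹)) := by
              rw [List.prod_cons, hL'prod]
          _ = x * ((R * y * R⁻¹) * t₁.prod) * (R * t₂.prod * R⁻¹) := by group
          _ = x * (t₁.prod * (R * y * R⁻¹)) * (R * t₂.prod * R⁻¹) := by rw [← hc]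
          _ = (x :: t₁).prod * (R * (y :: t₂).prod * R⁻¹) := by
              rw [List.prod_cons, List.prod_cons]; group

/-- Dennis–Vaserstein type lemma for strongly reversible elements: if `R` is an involution of
`G`, every element of a subgroup `H` commutes with every element of `R • H • R⁻¹`, and `g ∈ H`
is a product of at most `2p` elements strongly reversible in `H`, then `g` is a product of at
most `p + 1` elements strongly reversible in `G`. -/
theorem strongly_reversible_length_halving {G : Type*} [Group G] (H : Subgroup G) (R : G)
    (hR : R * R = 1)
    (hcomm : ∀ h₁ ∈ H, ∀ h₂ ∈ H, Commute h₁ (R * h₂ * R⁻¹))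
    (p : ℕ) (hp : 1 ≤ p) (g : G) (hg : g ∈ H)
    (hprod : ∃ l : List G, l.length ≤ 2 * p ∧
      (∀ x ∈ l, x ∈ H ∧ ∃ h ∈ H, h * h = 1 ∧ h * x * h⁻¹ = x⁻¹) ∧ g = l.prod) :
    ∃ l : List G, l.length ≤ p + 1 ∧
      (∀ x ∈ l, ∃ h : G, h * h = 1 ∧ h * x * h⁻¹ = x⁻¹) ∧ g = l.prod := by
  obtain ⟨l, hlen, hQ, hgl⟩ := hprod
  have hRinv : R⁻¹ = R := inv_eq_of_mul_eq_one_right hR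
  -- pad the list to length exactly 2 * p
  set l' : List G := l ++ List.replicate (2 * p - l.length) 1 with hl'def
  have hlen' : l'.length = 2 * p := by
    simp only [hl'def, List.length_append, List.length_replicate]
    omega
  have hQ' : ∀ x ∈ l', x ∈ H ∧ ∃ h ∈ H, h * h = 1 ∧ h * x * h⁻¹ = x⁻¹ := by
    intro x hxmem
    rcases List.mem_append.1 hxmem with hxl | hxr
    · exact hQ x hxl
    · have hx1 : x = 1 := List.eq_of_mem_replicate hxr
      subst hx1
      exact ⟨H.one_mem, 1, H.one_mem, by simp, by simp⟩
  have hgl' : g = l'.prod := by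
    simp [hl'def, ← hgl]
  -- split into two halves
  set l₁ : List G := l'.take p with hl₁def
  set l₂ : List G := l'.drop p with hl₂def
  have h1len : l₁.length = p := by
    simp only [hl₁def, List.length_take, hlen']; omega
  have h2len : l₂.length = p := by
    simp only [hl₂def, List.length_drop, hlen']; omega
  have hQ1 : ∀ x ∈ l₁, x ∈ H ∧ ∃ h ∈ H, h * h = 1 ∧ h * x * h⁻¹ = x⁻¹ :=
    fun x hx => hQ' x (List.take_subset p l' hx)
  have hQ2 : ∀ x ∈ l₂, x ∈ H ∧ ∃ h ∈ H, h * h = 1 ∧ h * x * h⁻¹ = x⁻¹ :=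
    fun x hx => hQ' x (List.drop_subset p l' hx)
  obtain ⟨L₀, hL₀len, hL₀srev, hL₀prod⟩ :=
    srev_zip_aux H R hcomm l₁ l₂ (by rw [h1len, h2len]) hQ1 hQ2
  set a : G := l₁.prod with hadef
  set b : G := l₂.prod with hbdef
  have hab : a * b = g := by
    rw [hadef, hbdef, hgl', hl₁def, hl₂def, List.prod_take_mul_prod_drop]
  refine ⟨L₀ ++ [(R * b⁻¹ * R⁻¹) * b], ?_, ?_, ?_⟩
  · simp [hL₀len, h1len]
  · intro z hz
    rcases List.mem_append.1 hz with hz | hz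
    · exact hL₀srev z hz
    · have hz1 : z = (R * b⁻¹ * R⁻¹) * b := by simpa using hz
      subst hz1
      refine ⟨R, hR, ?_⟩
      have h1 : ((R * b⁻¹ * R⁻¹) * b)⁻¹ = b⁻¹ * (R * b * R⁻¹) := by group
      have h2 : R * ((R * b⁻¹ * R⁻¹) * b) * R⁻¹ = (R * R) * b⁻¹ * R⁻¹ * b * R⁻¹ := by group
      rw [h1, h2, hR, hRinv]
      group
  · have hLp : (L₀ ++ [(R * b⁻¹ * R⁻¹) * b]).prod
        = (a * (R * b * R⁻¹)) * ((R * b⁻¹ * R⁻¹) * b) := by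
      rw [List.prod_append, List.prod_singleton, hL₀prod]
    rw [hLp, ← hab]
    group
end
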